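/- arXiv:2306.12114 — 3 statements merged into one kernel-verified Lean document; each statement's English description precedes it below -/
import Mathlib

section
/- For every sequence ε ∈ {0,1}^ℕ and every z ∈ (0,1], for Lebesgue-almost every x ∈ [0,1] the limit lim_{N→∞} (1/N)·#{1 ≤ n ≤ N : θ_n^ε(x) < z} exists and equals F_ε(z) = Σ_{n∈N_1} a_n + Σ_{n∈N_2} t_{n+1−ε_n}·z, where N_1 = {n ∈ ℕ : a_n/t_{n+1−ε_n} < z} and N_2 = {n ∈ ℕ : a_n/t_{n+1−ε_n} ≥ z}. -/
open MeasureTheory Filter Topology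

/-- The limiting cumulative distribution function `F_ε(z)` of the approximation
coefficients, for a generalised α-Lüroth expansion determined by the sequence
`t` (1-indexed, `t 1 = 1`) and the sign sequence `ε` (0-indexed: `ε n` is the
paper's `ε_{n+1}`).  Here `a_n = t n - t (n+1)` and the `n`-th summand is
`a_n` if `a_n / t_{n+1-ε_n} < z` and `t_{n+1-ε_n}·z` otherwise. -/
noncomputable def F (t : ℕ → ℝ) (ε : ℕ → Fin 2) (z : ℝ) : ℝ :=
  ∑' n : ℕ,
    if (t (n + 1) - t (n + 2)) / t (n + 2 - (ε n : ℕ)) < z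
    then t (n + 1) - t (n + 2)
    else t (n + 2 - (ε n : ℕ)) * z


/-- The expected average value `M_ε = ∫_[0,1] (1 - F_ε) dλ`. -/
noncomputable def Mavg (t : ℕ → ℝ) (ε : ℕ → Fin 2) : ℝ :=
  ∫ z in Set.Icc (0 : ℝ) 1, (1 - F t ε z)


/-- `t` generates an α-Lüroth partition: `(t_n)_{n ≥ 1}` is a strictly decreasing
sequence in `(0,1]` with `t 1 = 1` tending to `0`. -/
structure IsLurothSeq (t : ℕ → ℝ) : Prop where
  t_one : t 1 = 1
  pos : ∀ n, 1 ≤ n → 0 < t n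
  anti : ∀ n, 1 ≤ n → t (n + 1) < t n
  tendsto_zero : Tendsto t atTop (nhds 0)


/-- For `x ∈ (0,1]`, `idx t x` is the (paper, 1-based) index `n` of the partition
element `A_n = (t_{n+1}, t_n]` containing `x`. -/
noncomputable def idx (t : ℕ → ℝ) (x : ℝ) : ℕ :=
  sInf {n : ℕ | 1 ≤ n ∧ t (n + 1) < x}


section basics
variable {t : ℕ → ℝ}

lemma t_mono (ht : IsLurothSeq t) : ∀ m k, 1 ≤ m → m ≤ k → t k ≤ t m := by
  intro m k hm hmk
  induction k with
  | zero => omega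
  | succ n ih =>
    rcases Nat.lt_or_ge m (n+1) with h | h
    · have h1 : 1 ≤ n := by omega
      exact le_trans (ht.anti n h1).le (ih (by omega))
    · have : m = n + 1 := by omega
      simp [this]

lemma t_le_one (ht : IsLurothSeq t) {k : ℕ} (hk : 1 ≤ k) : t k ≤ 1 := by
  simpa [ht.t_one] using t_mono ht 1 k le_rfl hk

lemma idx_set_nonempty (ht : IsLurothSeq t) {x : ℝ} (hx : 0 < x) :
    {n : ℕ | 1 ≤ n ∧ t (n + 1) < x}.Nonempty := by
  have h := ht.tendsto_zero.eventually_lt_const hx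
  rcases (h.and (eventually_ge_atTop 2)).exists with ⟨n, hn1, hn2⟩
  refine ⟨n - 1, by omega, ?_⟩
  rw [Nat.sub_add_cancel (by omega : 1 ≤ n)]
  exact hn1

lemma idx_mem (ht : IsLurothSeq t) {x : ℝ} (hx : 0 < x) :
    1 ≤ idx t x ∧ t (idx t x + 1) < x :=
  Nat.sInf_mem (idx_set_nonempty ht hx)

lemma idx_spec (ht : IsLurothSeq t) {x : ℝ} (hx : 0 < x) (hx1 : x ≤ 1) :
    1 ≤ idx t x ∧ x ∈ Set.Ioc (t (idx t x + 1)) (t (idx t x)) := by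
  have hmem := idx_mem ht hx
  refine ⟨hmem.1, hmem.2, ?_⟩
  rcases eq_or_lt_of_le hmem.1 with h | h
  · rw [← h, ht.t_one]; exact hx1
  · have hlt : idx t x - 1 < sInf {n : ℕ | 1 ≤ n ∧ t (n + 1) < x} := by
      show idx t x - 1 < idx t x; omega
    have hnotmem := Nat.notMem_of_lt_sInf hlt
    simp only [Set.mem_setOf_eq, not_and, not_lt] at hnotmem
    have h2 := hnotmem (by omega)
    have h3 : idx t x - 1 + 1 = idx t x := by omega
    rwa [h3] at h2

lemma idx_eq (ht : IsLurothSeq t) {x : ℝ} {k : ℕ} (hk : 1 ≤ k)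
    (h : x ∈ Set.Ioc (t (k + 1)) (t k)) : idx t x = k := by
  have hx : 0 < x := lt_of_le_of_lt (ht.pos (k+1) (by omega)).le h.1
  have hle : idx t x ≤ k := Nat.sInf_le ⟨hk, h.1⟩
  have hmem := idx_mem ht hx
  by_contra hne2
  have : t k ≤ t (idx t x + 1) := t_mono ht _ _ (by omega) (by omega)
  exact absurd hmem.2 (not_lt.2 (h.2.trans this))

lemma idx_eq_zero_iff (ht : IsLurothSeq t) {x : ℝ} : idx t x = 0 ↔ x ≤ 0 := by
  constructor
  · intro h
    by_contra hx
    push_neg at hx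
    have hmem := idx_mem ht hx
    omega
  · intro h
    have hS : {n : ℕ | 1 ≤ n ∧ t (n + 1) < x} = ∅ := by
      ext n; simp only [Set.mem_setOf_eq, Set.mem_empty_iff_false, iff_false, not_and, not_lt]
      intro hn; exact le_trans h (ht.pos (n+1) (by omega)).le
    rw [idx, hS]; simp

lemma measurable_idx (ht : IsLurothSeq t) : Measurable (idx t) := by
  apply measurable_to_countable'
  intro k
  match k with
  | 0 =>
    have hset : idx t ⁻¹' {0} = Set.Iic 0 := by
      ext x; simp [idx_eq_zero_iff ht]
    rw [hset]; exact measurableSet_Iic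
  | 1 =>
    have hset : idx t ⁻¹' {1} = Set.Ioi (t 2) := by
      ext x
      simp only [Set.mem_preimage, Set.mem_singleton_iff, Set.mem_Ioi]
      constructor
      · intro h
        have hx : 0 < x := by
          by_contra hx; push_neg at hx
          have := (idx_eq_zero_iff ht).2 hx; omega
        have hmem := idx_mem ht hx
        rw [h] at hmem
        exact hmem.2
      · intro h
        have hx : 0 < x := lt_trans (ht.pos 2 (by omega)) h
        rcases le_or_gt x 1 with h1 | h1
        · exact idx_eq ht le_rfl ⟨h, by rwa [ht.t_one]⟩
        · refine le_antisymm (Nat.sInf_le ⟨le_rfl, h⟩) ?_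
          exact (idx_mem ht hx).1
    rw [hset]; exact measurableSet_Ioi
  | (k+2) =>
    have hset : idx t ⁻¹' {k+2} = Set.Ioc (t (k+3)) (t (k+2)) := by
      ext x
      simp only [Set.mem_preimage, Set.mem_singleton_iff]
      constructor
      · intro h
        have hx : 0 < x := by
          by_contra hx; push_neg at hx
          have := (idx_eq_zero_iff ht).2 hx; omega
        have hmem := idx_mem ht hx
        refine ⟨by rw [h] at hmem; exact hmem.2, ?_⟩
        have hlt : k + 1 < sInf {n : ℕ | 1 ≤ n ∧ t (n + 1) < x} := by
          show k + 1 < idx t x; omega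
        have hnm := Nat.notMem_of_lt_sInf hlt
        simp only [Set.mem_setOf_eq, not_and, not_lt] at hnm
        exact hnm (by omega)
      · intro h
        exact idx_eq ht (by omega) h
    rw [hset]; exact measurableSet_Ioc

end basics


/-- The generalised α-Lüroth transformation `T_ε` (the sign sequence `ε` is
0-indexed: `ε (n-1)` is the paper's `ε_n`). -/
noncomputable def Tmap (t : ℕ → ℝ) (ε : ℕ → Fin 2) (x : ℝ) : ℝ :=
  if x ≤ 0 then 0
  else if ε (idx t x - 1) = 0 then
    (x - t (idx t x + 1)) / (t (idx t x) - t (idx t x + 1))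
  else
    (t (idx t x) - x) / (t (idx t x) - t (idx t x + 1))


section XX
variable {t : ℕ → ℝ} {ε : ℕ → Fin 2}

lemma a_pos (ht : IsLurothSeq t) {k : ℕ} (hk : 1 ≤ k) : 0 < t k - t (k+1) :=
  sub_pos.2 (ht.anti k hk)

lemma a_le_one (ht : IsLurothSeq t) {k : ℕ} (hk : 1 ≤ k) : t k - t (k+1) ≤ 1 := by
  have := t_le_one ht hk
  have := (ht.pos (k+1) (by omega)).le
  linarith

lemma Tmap_eq (ht : IsLurothSeq t) (ε : ℕ → Fin 2) {x : ℝ} {k : ℕ} (hk : 1 ≤ k)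
    (h : x ∈ Set.Ioc (t (k + 1)) (t k)) :
    Tmap t ε x = if ε (k - 1) = 0 then (x - t (k+1)) / (t k - t (k+1))
      else (t k - x) / (t k - t (k+1)) := by
  have hx : 0 < x := lt_of_le_of_lt (ht.pos (k+1) (by omega)).le h.1
  rw [Tmap, if_neg (not_le.2 hx), idx_eq ht hk h]

lemma Tmap_mem_Icc (ht : IsLurothSeq t) (ε : ℕ → Fin 2) {x : ℝ} {k : ℕ} (hk : 1 ≤ k)
    (h : x ∈ Set.Ioc (t (k + 1)) (t k)) : Tmap t ε x ∈ Set.Icc (0:ℝ) 1 := by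
  have ha := a_pos ht hk
  rw [Tmap_eq ht ε hk h]
  rcases h with ⟨h1, h2⟩
  split_ifs
  · exact ⟨div_nonneg (by linarith) ha.le, by rw [div_le_one ha]; linarith⟩
  · exact ⟨div_nonneg (by linarith) ha.le, by rw [div_le_one ha]; linarith⟩

lemma Tmap_mem_Icc' (ht : IsLurothSeq t) (ε : ℕ → Fin 2) {x : ℝ} (h : x ∈ Set.Icc (0:ℝ) 1) :
    Tmap t ε x ∈ Set.Icc (0:ℝ) 1 := by
  rcases eq_or_lt_of_le h.1 with h0 | h0
  · rw [Tmap, if_pos (le_of_eq h0.symm)]; exact ⟨le_rfl, zero_le_one⟩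
  · have hs := idx_spec ht h0 h.2
    exact Tmap_mem_Icc ht ε hs.1 hs.2

lemma Tmap_key (ht : IsLurothSeq t) (ε : ℕ → Fin 2) {x : ℝ} {k : ℕ} (hk : 1 ≤ k)
    (h : x ∈ Set.Ioc (t (k + 1)) (t k)) :
    x = t (k + 1 - (ε (k-1) : ℕ)) + (-1 : ℝ) ^ (ε (k-1) : ℕ) * ((t k - t (k+1)) * Tmap t ε x) := by
  have ha := (a_pos ht hk).ne'
  rcases (by omega : ε (k-1) = 0 ∨ ε (k-1) = 1) with he | he
  · rw [Tmap_eq ht ε hk h, if_pos he, he]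
    simp only [Fin.val_zero, pow_zero, one_mul, Nat.sub_zero]
    rw [mul_div_cancel₀ _ ha]; ring
  · have hv : (ε (k-1) : ℕ) = 1 := by omega
    rw [Tmap_eq ht ε hk h, if_neg (by omega), hv]
    simp only [pow_one, Nat.add_sub_cancel]
    rw [mul_div_cancel₀ _ ha]; ring

lemma measurable_Tmap (ht : IsLurothSeq t) (ε : ℕ → Fin 2) : Measurable (Tmap t ε) := by
  have hidx := measurable_idx ht
  have h1 : Measurable fun x => t (idx t x) := (measurable_from_nat (f := t)).comp hidx
  have h2 : Measurable fun x => t (idx t x + 1) :=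
    (measurable_from_nat (f := fun k => t (k+1))).comp hidx
  have hc1 : MeasurableSet {x : ℝ | x ≤ 0} := measurableSet_Iic
  have hc2 : MeasurableSet (idx t ⁻¹' {k : ℕ | ε (k-1) = 0}) :=
    hidx (MeasurableSet.of_discrete)
  unfold Tmap
  apply Measurable.ite hc1 measurable_const
  apply Measurable.ite hc2
  · exact (measurable_id.sub h2).div (h1.sub h2)
  · exact (h1.sub measurable_id).div (h1.sub h2)

/-- volume of preimage under x ↦ (x - c)/a -/
lemma vol_aff₀ {a c : ℝ} (ha : 0 < a) (S : Set ℝ) :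
    volume ((fun x => (x - c)/a) ⁻¹' S) = ENNReal.ofReal a * volume S := by
  have : (fun x : ℝ => (x - c)/a) = (fun y : ℝ => a⁻¹ * y) ∘ (fun x : ℝ => x + (-c)) := by
    funext x; simp [div_eq_inv_mul, sub_eq_add_neg]
  rw [this, Set.preimage_comp]
  rw [measure_preimage_add_right]
  rw [Real.volume_preimage_mul_left (inv_ne_zero ha.ne')]
  congr 1
  rw [inv_inv, abs_of_pos ha]

lemma vol_aff₁ {a c : ℝ} (ha : 0 < a) (S : Set ℝ) :
    volume ((fun x => (c - x)/a) ⁻¹' S) = ENNReal.ofReal a * volume S := by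
  have : (fun x : ℝ => (c - x)/a) = (fun x => (x - (-c))/a) ∘ (fun x : ℝ => -x) := by
    funext x; simp; ring_nf
  rw [this, Set.preimage_comp, Measure.measure_preimage_neg, vol_aff₀ ha]

end XX


section XX3
variable {t : ℕ → ℝ} {ε : ℕ → Fin 2}

lemma Ioc_sub (ht : IsLurothSeq t) {k : ℕ} (hk : 1 ≤ k) :
    Set.Ioc (t (k+1)) (t k) ⊆ Set.Ioc (0:ℝ) 1 := fun x hx =>
  ⟨lt_of_le_of_lt (ht.pos (k+1) (by omega)).le hx.1, hx.2.trans (t_le_one ht hk)⟩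

lemma step_measure (ht : IsLurothSeq t) (ε : ℕ → Fin 2) {k : ℕ} (hk : 1 ≤ k)
    {C : Set ℝ} (hC : MeasurableSet C) :
    volume (Set.Ioc (t (k+1)) (t k) ∩ Tmap t ε ⁻¹' C)
      = ENNReal.ofReal (t k - t (k+1)) * volume (C ∩ Set.Ioc 0 1) := by
  have ha := a_pos ht hk
  by_cases he : ε (k-1) = 0
  · have hset : Set.Ioc (t (k+1)) (t k) ∩ Tmap t ε ⁻¹' C
        = (fun x => (x - t (k+1))/(t k - t (k+1))) ⁻¹' (C ∩ Set.Ioc 0 1) := by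
      ext x
      simp only [Set.mem_inter_iff, Set.mem_preimage, Set.mem_Ioc]
      constructor
      · rintro ⟨hx, hTx⟩
        rw [Tmap_eq ht ε hk hx, if_pos he] at hTx
        refine ⟨hTx, ?_, ?_⟩
        · apply div_pos (by linarith [hx.1]) ha
        · rw [div_le_one ha]; linarith [hx.2]
      · rintro ⟨hc, h0, h1⟩
        rw [div_le_one ha] at h1
        have hd : 0 < (x - t (k+1)) := by
          by_contra hh
          push_neg at hh
          have : (x - t (k+1))/(t k - t (k+1)) ≤ 0 := div_nonpos_of_nonpos_of_nonneg (by linarith) ha.le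
          linarith
        have hx : x ∈ Set.Ioc (t (k+1)) (t k) := ⟨by linarith, by linarith⟩
        refine ⟨hx, ?_⟩
        rw [Tmap_eq ht ε hk hx, if_pos he]
        exact hc
    rw [hset, vol_aff₀ ha]
  · have hset : Set.Ioc (t (k+1)) (t k) ∩ Tmap t ε ⁻¹' C
        = (fun x => (t k - x)/(t k - t (k+1))) ⁻¹' (C ∩ Set.Ico 0 1) := by
      ext x
      simp only [Set.mem_inter_iff, Set.mem_preimage, Set.mem_Ico]
      constructor
      · rintro ⟨hx, hTx⟩
        rw [Tmap_eq ht ε hk hx, if_neg he] at hTx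
        refine ⟨hTx, div_nonneg (by linarith [hx.2]) ha.le, ?_⟩
        rw [div_lt_one ha]; linarith [hx.1]
      · rintro ⟨hc, h0, h1⟩
        rw [div_lt_one ha] at h1
        have h0' : t k - x ≥ 0 := by
          by_contra hh
          push_neg at hh
          have : (t k - x)/(t k - t (k+1)) < 0 := div_neg_of_neg_of_pos (by linarith) ha
          linarith
        have hx : x ∈ Set.Ioc (t (k+1)) (t k) := ⟨by linarith, by linarith⟩
        refine ⟨hx, ?_⟩
        rw [Tmap_eq ht ε hk hx, if_neg he]
        exact hc
    rw [hset, vol_aff₁ ha]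
    congr 1
    apply measure_congr
    exact (Filter.EventuallyEq.refl _ C).inter ((Ioo_ae_eq_Ico (μ := volume) (a := (0:ℝ)) (b := 1)).symm.trans Ioo_ae_eq_Ioc)

lemma cover (ht : IsLurothSeq t) :
    Set.Ioc (0:ℝ) 1 = ⋃ k : ℕ, Set.Ioc (t (k+2)) (t (k+1)) := by
  ext x
  simp only [Set.mem_iUnion]
  constructor
  · intro hx
    have hs := idx_spec ht hx.1 hx.2
    refine ⟨idx t x - 1, ?_⟩
    have h1 : idx t x - 1 + 2 = idx t x + 1 := by omega
    have h2 : idx t x - 1 + 1 = idx t x := by omega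
    rw [h1, h2]
    exact hs.2
  · rintro ⟨k, hk⟩
    exact Ioc_sub ht (by omega) hk

lemma disjoint_Aks (ht : IsLurothSeq t) :
    Pairwise (Function.onFun Disjoint fun k : ℕ => Set.Ioc (t (k+2)) (t (k+1))) := by
  intro k j hkj
  rw [Function.onFun, Set.Ioc_disjoint_Ioc]
  rcases Nat.lt_or_ge k j with h | h
  · calc min (t (k+1)) (t (j+1)) ≤ t (j+1) := min_le_right _ _
      _ ≤ t (k+2) := t_mono ht _ _ (by omega) (by omega)
      _ ≤ max (t (k+2)) (t (j+2)) := le_max_left _ _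
  · have h' : j < k := by omega
    calc min (t (k+1)) (t (j+1)) ≤ t (k+1) := min_le_left _ _
      _ ≤ t (j+2) := t_mono ht _ _ (by omega) (by omega)
      _ ≤ max (t (k+2)) (t (j+2)) := le_max_right _ _

lemma vol_Ioc01 : volume (Set.Ioc (0:ℝ) 1) = 1 := by
  rw [Real.volume_Ioc]; norm_num

lemma Tpre (ht : IsLurothSeq t) (ε : ℕ → Fin 2) {C : Set ℝ} (hC : MeasurableSet C) :
    volume (Tmap t ε ⁻¹' C ∩ Set.Ioc 0 1) = volume (C ∩ Set.Ioc 0 1) := by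
  have hmT := measurable_Tmap ht ε
  have hset : Tmap t ε ⁻¹' C ∩ Set.Ioc 0 1
      = ⋃ k : ℕ, (Set.Ioc (t (k+2)) (t (k+1)) ∩ Tmap t ε ⁻¹' C) := by
    rw [Set.inter_comm, cover ht, Set.iUnion_inter]
  rw [hset, measure_iUnion ?hd ?hm]
  case hd => exact fun k j hkj => Disjoint.mono Set.inter_subset_left Set.inter_subset_left (disjoint_Aks ht hkj)
  case hm => exact fun k => measurableSet_Ioc.inter (hmT hC)
  calc ∑' k : ℕ, volume (Set.Ioc (t (k+2)) (t (k+1)) ∩ Tmap t ε ⁻¹' C)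
      = ∑' k : ℕ, ENNReal.ofReal (t (k+1) - t (k+2)) * volume (C ∩ Set.Ioc 0 1) := by
        congr 1; funext k; exact step_measure ht ε (by omega) hC
    _ = (∑' k : ℕ, ENNReal.ofReal (t (k+1) - t (k+2))) * volume (C ∩ Set.Ioc 0 1) :=
        ENNReal.tsum_mul_right
    _ = volume (C ∩ Set.Ioc 0 1) := by
        have h1 : ∑' k : ℕ, ENNReal.ofReal (t (k+1) - t (k+2))
            = ∑' k : ℕ, volume (Set.Ioc (t (k+2)) (t (k+1))) := by
          congr 1; funext k; rw [Real.volume_Ioc]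
        rw [h1, ← measure_iUnion (disjoint_Aks ht) (fun k => measurableSet_Ioc),
          ← cover ht, vol_Ioc01, one_mul]

lemma Tmp (ht : IsLurothSeq t) (ε : ℕ → Fin 2) :
    MeasurePreserving (Tmap t ε) (volume.restrict (Set.Ioc (0:ℝ) 1))
      (volume.restrict (Set.Ioc (0:ℝ) 1)) := by
  refine ⟨measurable_Tmap ht ε, ?_⟩
  ext C hC
  rw [Measure.map_apply (measurable_Tmap ht ε) hC, Measure.restrict_apply hC,
    Measure.restrict_apply ((measurable_Tmap ht ε) hC)]
  exact Tpre ht ε hC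

def cyl (t : ℕ → ℝ) (ε : ℕ → Fin 2) : List ℕ → Set ℝ
  | [] => Set.univ
  | k :: l => Set.Ioc (t (k+1)) (t k) ∩ Tmap t ε ⁻¹' (cyl t ε l)

lemma measurableSet_cyl (ht : IsLurothSeq t) (ε : ℕ → Fin 2) (l : List ℕ) :
    MeasurableSet (cyl t ε l) := by
  induction l with
  | nil => exact MeasurableSet.univ
  | cons k l ih => exact measurableSet_Ioc.inter ((measurable_Tmap ht ε) ih)

lemma cyl_measure (ht : IsLurothSeq t) (ε : ℕ → Fin 2) :
    ∀ (l : List ℕ), (∀ k ∈ l, 1 ≤ k) → ∀ {C : Set ℝ}, MeasurableSet C →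
    volume ((cyl t ε l ∩ (Tmap t ε)^[l.length] ⁻¹' C) ∩ Set.Ioc 0 1)
      = ENNReal.ofReal ((l.map (fun k => t k - t (k+1))).prod) * volume (C ∩ Set.Ioc 0 1) := by
  intro l
  induction l with
  | nil =>
    intro _ C hC
    simp only [cyl, List.length_nil, Function.iterate_zero, Set.preimage_id, List.map_nil,
      List.prod_nil, ENNReal.ofReal_one, one_mul, Set.univ_inter]
  | cons k l ih =>
    intro hl C hC
    have hk : 1 ≤ k := hl k (List.mem_cons_self)
    have hset : (cyl t ε (k :: l) ∩ (Tmap t ε)^[(k :: l).length] ⁻¹' C) ∩ Set.Ioc 0 1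
        = Set.Ioc (t (k+1)) (t k) ∩ Tmap t ε ⁻¹' (cyl t ε l ∩ (Tmap t ε)^[l.length] ⁻¹' C) := by
      have hit : (Tmap t ε)^[(k :: l).length] ⁻¹' C
          = Tmap t ε ⁻¹' ((Tmap t ε)^[l.length] ⁻¹' C) := by
        rw [List.length_cons, Function.iterate_succ, Set.preimage_comp]
      rw [hit]
      have hsub : Set.Ioc (t (k+1)) (t k) ⊆ Set.Ioc (0:ℝ) 1 := Ioc_sub ht hk
      show (Set.Ioc (t (k+1)) (t k) ∩ Tmap t ε ⁻¹' (cyl t ε l)) ∩ _ ∩ _ = _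
      rw [Set.preimage_inter]
      ext x
      constructor
      · rintro ⟨⟨⟨h1, h2⟩, h3⟩, _⟩
        exact ⟨h1, h2, h3⟩
      · rintro ⟨h1, h2, h3⟩
        exact ⟨⟨⟨h1, h2⟩, h3⟩, hsub h1⟩
    rw [hset, step_measure ht ε hk ((measurableSet_cyl ht ε l).inter
      ((measurable_Tmap ht ε).iterate l.length hC))]
    rw [ih (fun j hj => hl j (List.mem_cons_of_mem _ hj)) hC]
    rw [List.map_cons, List.prod_cons, ENNReal.ofReal_mul (a_pos ht hk).le, mul_assoc]

end XX3


/-- The digit `d_{k+1}(x)` (0-indexed in `k`). -/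
noncomputable def dig (t : ℕ → ℝ) (ε : ℕ → Fin 2) (x : ℝ) (k : ℕ) : ℕ :=
  idx t ((Tmap t ε)^[k] x)


/-- The sign `s_{k+1}(x) = ε_{d_{k+1}(x)}` (0-indexed in `k`, valued in `{0,1} ⊆ ℕ`). -/
noncomputable def sgn (t : ℕ → ℝ) (ε : ℕ → Fin 2) (x : ℝ) (k : ℕ) : ℕ :=
  (ε (dig t ε x k - 1) : ℕ)


/-- The `n`-th approximation `p_n/q_n` of `x`:
`Σ_{k=1}^n (−1)^{s_1+⋯+s_{k−1}} t_{d_k+1−s_k} Π_{i=1}^{k−1} a_{d_i}`. -/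
noncomputable def approx (t : ℕ → ℝ) (ε : ℕ → Fin 2) (x : ℝ) (n : ℕ) : ℝ :=
  ∑ k ∈ Finset.range n,
    (-1 : ℝ) ^ (∑ i ∈ Finset.range k, sgn t ε x i) *
      (t (dig t ε x k + 1 - sgn t ε x k) *
        ∏ i ∈ Finset.range k, (t (dig t ε x i) - t (dig t ε x i + 1)))


/-- The denominator `q_n = (t_{d_n+1−s_n} Π_{i=1}^{n−1} a_{d_i})⁻¹` (paper `n ≥ 1`). -/
noncomputable def qden (t : ℕ → ℝ) (ε : ℕ → Fin 2) (x : ℝ) (n : ℕ) : ℝ :=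
  1 / (t (dig t ε x (n - 1) + 1 - sgn t ε x (n - 1)) *
      ∏ i ∈ Finset.range (n - 1), (t (dig t ε x i) - t (dig t ε x i + 1)))


/-- The approximation coefficient `θ_n^ε(x) = q_n · |x − p_n/q_n|`. -/
noncomputable def theta (t : ℕ → ℝ) (ε : ℕ → Fin 2) (x : ℝ) (n : ℕ) : ℝ :=
  qden t ε x n * |x - approx t ε x n|


section XX4
variable {t : ℕ → ℝ} {ε : ℕ → Fin 2}

def Good (t : ℕ → ℝ) (ε : ℕ → Fin 2) (x : ℝ) : Prop :=
  ∀ n : ℕ, (Tmap t ε)^[n] x ∈ Set.Ioc (0:ℝ) 1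

lemma dig_shift (x : ℝ) (i : ℕ) : dig t ε (Tmap t ε x) i = dig t ε x (i+1) := by
  rw [dig, dig, Function.iterate_succ_apply]

lemma good_Tmap {x : ℝ} (hg : Good t ε x) : Good t ε (Tmap t ε x) := by
  intro n
  rw [← Function.iterate_succ_apply]
  exact hg (n+1)

lemma good_iterate {x : ℝ} (hg : Good t ε x) (n : ℕ) : Good t ε ((Tmap t ε)^[n] x) := by
  intro m
  rw [← Function.iterate_add_apply]
  exact hg (m + n)

lemma iter_mem_Icc (ht : IsLurothSeq t) (ε : ℕ → Fin 2) {x : ℝ} (hx : x ∈ Set.Icc (0:ℝ) 1) (n : ℕ) :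
    (Tmap t ε)^[n] x ∈ Set.Icc (0:ℝ) 1 := by
  induction n with
  | zero => exact hx
  | succ n ih => rw [Function.iterate_succ_apply']; exact Tmap_mem_Icc' ht ε ih

lemma dig_ge_one (ht : IsLurothSeq t) {x : ℝ} (hg : Good t ε x) (i : ℕ) :
    1 ≤ dig t ε x i :=
  (idx_spec ht (hg i).1 (hg i).2).1

lemma phi_inj₀ {a c : ℝ} (ha : a ≠ 0) : Function.Injective (fun x : ℝ => (x - c)/a) := by
  intro x y h
  field_simp at h
  linarith

lemma phi_inj₁ {a c : ℝ} (ha : a ≠ 0) : Function.Injective (fun x : ℝ => (c - x)/a) := by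
  intro x y h
  field_simp at h
  linarith

lemma bad_countable (ht : IsLurothSeq t) (ε : ℕ → Fin 2) (n : ℕ) :
    Set.Countable ((Tmap t ε)^[n] ⁻¹' {0} ∩ Set.Icc 0 1) := by
  induction n with
  | zero =>
    apply Set.Countable.mono (s₁ := _) (Set.Subset.trans Set.inter_subset_left (by simp))
      (Set.countable_singleton (0:ℝ))
  | succ n ih =>
    have hsub : (Tmap t ε)^[n+1] ⁻¹' {0} ∩ Set.Icc 0 1
        ⊆ {0} ∪ ⋃ k : ℕ, (Set.Ioc (t (k+2)) (t (k+1))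
            ∩ Tmap t ε ⁻¹' ((Tmap t ε)^[n] ⁻¹' {0} ∩ Set.Icc 0 1)) := by
      rintro x ⟨hx0, hx1⟩
      rcases eq_or_ne x 0 with rfl | hne
      · exact Or.inl rfl
      · right
        have hxIoc : x ∈ Set.Ioc (0:ℝ) 1 :=
          ⟨lt_of_le_of_ne hx1.1 (Ne.symm hne), hx1.2⟩
        have hcov := (cover ht) ▸ hxIoc
        rw [Set.mem_iUnion] at hcov ⊢
        rcases hcov with ⟨k, hk⟩
        refine ⟨k, hk, ?_, Tmap_mem_Icc' ht ε ⟨hxIoc.1.le, hxIoc.2⟩⟩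
        · show (Tmap t ε)^[n] (Tmap t ε x) ∈ ({0} : Set ℝ)
          rw [← Function.iterate_succ_apply]
          exact hx0
    apply Set.Countable.mono hsub
    apply Set.Countable.union (Set.countable_singleton 0)
    apply Set.countable_iUnion
    intro k
    have hk1 : 1 ≤ k + 1 := by omega
    by_cases he : ε (k+1-1) = 0
    · have : Set.Ioc (t (k+2)) (t (k+1)) ∩ Tmap t ε ⁻¹' ((Tmap t ε)^[n] ⁻¹' {0} ∩ Set.Icc 0 1)
          ⊆ (fun x : ℝ => (x - t (k+2))/(t (k+1) - t (k+2))) ⁻¹'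
            ((Tmap t ε)^[n] ⁻¹' {0} ∩ Set.Icc 0 1) := by
        rintro x ⟨hx, hTx⟩
        have := Tmap_eq ht ε hk1 hx
        rw [if_pos he] at this
        show _ ∈ _
        simp only [Set.mem_preimage]
        rw [← this]
        exact hTx
      exact Set.Countable.mono this (ih.preimage (phi_inj₀ (a_pos ht hk1).ne'))
    · have : Set.Ioc (t (k+2)) (t (k+1)) ∩ Tmap t ε ⁻¹' ((Tmap t ε)^[n] ⁻¹' {0} ∩ Set.Icc 0 1)
          ⊆ (fun x : ℝ => (t (k+1) - x)/(t (k+1) - t (k+2))) ⁻¹'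
            ((Tmap t ε)^[n] ⁻¹' {0} ∩ Set.Icc 0 1) := by
        rintro x ⟨hx, hTx⟩
        have := Tmap_eq ht ε hk1 hx
        rw [if_neg he] at this
        simp only [Set.mem_preimage]
        rw [← this]
        exact hTx
      exact Set.Countable.mono this (ih.preimage (phi_inj₁ (a_pos ht hk1).ne'))

lemma good_ae (ht : IsLurothSeq t) (ε : ℕ → Fin 2) :
    ∀ᵐ x ∂(volume.restrict (Set.Ioc (0:ℝ) 1)), Good t ε x := by
  rw [MeasureTheory.ae_iff]
  rw [MeasureTheory.Measure.restrict_apply' measurableSet_Ioc]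
  refine measure_mono_null ?_ (Set.Countable.measure_zero
      (Set.countable_iUnion (fun n => bad_countable ht ε n)) _)
  · rintro x ⟨hng, hx⟩
    simp only [Good, not_forall] at hng
    rcases hng with ⟨n, hn⟩
    have hIcc : (Tmap t ε)^[n] x ∈ Set.Icc (0:ℝ) 1 :=
      iter_mem_Icc ht ε ⟨hx.1.le, hx.2⟩ n
    have : (Tmap t ε)^[n] x = 0 := by
      rcases (Set.mem_Ioc.not.1 hn) with h
      push_neg at h
      rcases lt_or_ge 0 ((Tmap t ε)^[n] x) with h0 | h0
      · exact absurd (h h0) (not_lt.2 hIcc.2)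
      · exact le_antisymm h0 hIcc.1
    exact Set.mem_iUnion.2 ⟨n, this, ⟨hx.1.le, hx.2⟩⟩

end XX4


section XX5
variable {t : ℕ → ℝ} {ε : ℕ → Fin 2}

lemma sgn_le_one (x : ℝ) (k : ℕ) : sgn t ε x k ≤ 1 := by
  rw [sgn]; omega

lemma key_step (ht : IsLurothSeq t) (ε : ℕ → Fin 2) {x : ℝ} (hg : Good t ε x) (n : ℕ) :
    (Tmap t ε)^[n] x = t (dig t ε x n + 1 - sgn t ε x n)
      + (-1 : ℝ) ^ (sgn t ε x n) *
        ((t (dig t ε x n) - t (dig t ε x n + 1)) * (Tmap t ε)^[n+1] x) := by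
  have hy := hg n
  have hs := idx_spec ht hy.1 hy.2
  have := Tmap_key ht ε hs.1 hs.2
  rw [Function.iterate_succ_apply']
  exact this

lemma diff_eq (ht : IsLurothSeq t) (ε : ℕ → Fin 2) {x : ℝ} (hg : Good t ε x) (n : ℕ) :
    x - approx t ε x n = (-1 : ℝ) ^ (∑ i ∈ Finset.range n, sgn t ε x i) *
      ((∏ i ∈ Finset.range n, (t (dig t ε x i) - t (dig t ε x i + 1))) * (Tmap t ε)^[n] x) := by
  induction n with
  | zero => simp [approx]
  | succ n ih =>
    rw [approx, Finset.sum_range_succ, ← approx]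
    have hk := key_step ht ε hg n
    rw [Finset.sum_range_succ (f := fun i => sgn t ε x i),
      Finset.prod_range_succ, pow_add]
    have : x - (approx t ε x n + (-1:ℝ) ^ (∑ i ∈ Finset.range n, sgn t ε x i) *
        (t (dig t ε x n + 1 - sgn t ε x n) *
          ∏ i ∈ Finset.range n, (t (dig t ε x i) - t (dig t ε x i + 1))))
        = (x - approx t ε x n) - (-1:ℝ) ^ (∑ i ∈ Finset.range n, sgn t ε x i) *
        (t (dig t ε x n + 1 - sgn t ε x n) *
          ∏ i ∈ Finset.range n, (t (dig t ε x i) - t (dig t ε x i + 1))) := by ring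
    rw [this, ih]
    rw [hk]
    ring

noncomputable def Eset (t : ℕ → ℝ) (ε : ℕ → Fin 2) (z : ℝ) : Set ℝ :=
  {y | (t (idx t y) - t (idx t y + 1)) * Tmap t ε y
    < z * t (idx t y + 1 - (ε (idx t y - 1) : ℕ))}

lemma measurableSet_Eset (ht : IsLurothSeq t) (ε : ℕ → Fin 2) (z : ℝ) :
    MeasurableSet (Eset t ε z) := by
  have h1 : Measurable fun y => (t (idx t y) - t (idx t y + 1)) * Tmap t ε y :=
    (((measurable_from_nat (f := fun k => t k - t (k+1))).comp (measurable_idx ht))).mul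
      (measurable_Tmap ht ε)
  have h2 : Measurable fun y => z * t (idx t y + 1 - (ε (idx t y - 1) : ℕ)) :=
    ((measurable_from_nat (f := fun k => t (k + 1 - (ε (k - 1) : ℕ)))).comp
      (measurable_idx ht)).const_mul z
  exact measurableSet_lt h1 h2

lemma theta_lt_iff (ht : IsLurothSeq t) (ε : ℕ → Fin 2) {x z : ℝ} (hg : Good t ε x) (m : ℕ) :
    (theta t ε x (m+1) < z ↔ (Tmap t ε)^[m] x ∈ Eset t ε z) := by
  have hgi := good_iterate hg
  have hdig : ∀ i, 1 ≤ dig t ε x i := dig_ge_one ht hg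
  have hapos : ∀ i, 0 < t (dig t ε x i) - t (dig t ε x i + 1) := fun i => a_pos ht (hdig i)
  have hprodpos : ∀ r : ℕ, 0 < ∏ i ∈ Finset.range r, (t (dig t ε x i) - t (dig t ε x i + 1)) :=
    fun r => Finset.prod_pos (fun i _ => hapos i)
  have hts : 0 < t (dig t ε x m + 1 - sgn t ε x m) := by
    apply ht.pos
    have := sgn_le_one (t := t) (ε := ε) x m
    have := hdig m
    omega
  have hX : 0 < (Tmap t ε)^[m+1] x := (hg (m+1)).1
  have habs : |x - approx t ε x (m+1)|
      = (∏ i ∈ Finset.range (m+1), (t (dig t ε x i) - t (dig t ε x i + 1))) *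
        (Tmap t ε)^[m+1] x := by
    rw [diff_eq ht ε hg (m+1), abs_mul, abs_mul]
    rw [abs_of_pos (hprodpos (m+1)), abs_of_pos hX]
    simp [abs_pow]
  have hq : theta t ε x (m+1)
      = ((∏ i ∈ Finset.range (m+1), (t (dig t ε x i) - t (dig t ε x i + 1))) *
        (Tmap t ε)^[m+1] x) /
        (t (dig t ε x m + 1 - sgn t ε x m) *
          ∏ i ∈ Finset.range m, (t (dig t ε x i) - t (dig t ε x i + 1))) := by
    rw [theta, habs, qden]
    simp only [Nat.add_sub_cancel]
    rw [one_div, inv_mul_eq_div]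
  rw [hq, div_lt_iff₀ (mul_pos hts (hprodpos m))]
  rw [Finset.prod_range_succ]
  have hEq : (Tmap t ε)^[m] x ∈ Eset t ε z ↔
      (t (dig t ε x m) - t (dig t ε x m + 1)) * (Tmap t ε)^[m+1] x
        < z * t (dig t ε x m + 1 - sgn t ε x m) := by
    rw [Eset, Set.mem_setOf_eq]
    have hidx : idx t ((Tmap t ε)^[m] x) = dig t ε x m := rfl
    rw [hidx, Function.iterate_succ_apply']
    rw [sgn]
  rw [hEq]
  constructor <;> intro h <;> nlinarith [hprodpos m]

end XX5


section XX6
variable {t : ℕ → ℝ} {ε : ℕ → Fin 2} {z : ℝ}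

lemma a_summable (ht : IsLurothSeq t) : Summable (fun k : ℕ => t (k+1) - t (k+2)) := by
  apply summable_of_sum_range_le (c := 1)
  · intro k; exact (a_pos ht (by omega)).le
  · intro n
    have : ∑ i ∈ Finset.range n, (t (i+1) - t (i+2)) = t 1 - t (n+1) :=
      Finset.sum_range_sub' (f := fun i => t (i+1)) n
    rw [this, ht.t_one]
    have := (ht.pos (n+1) (by omega)).le
    linarith

lemma a_hasSum (ht : IsLurothSeq t) : HasSum (fun k : ℕ => t (k+1) - t (k+2)) 1 := by
  rw [(a_summable ht).hasSum_iff_tendsto_nat]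
  have heq : (fun n => ∑ i ∈ Finset.range n, (t (i+1) - t (i+2))) = fun n => t 1 - t (n+1) := by
    funext n; exact Finset.sum_range_sub' (f := fun i => t (i+1)) n
  rw [heq, ht.t_one]
  have h := ht.tendsto_zero.comp (tendsto_add_atTop_nat 1)
  simpa using (tendsto_const_nhds (x := (1:ℝ)) (f := atTop)).sub h

noncomputable def Fterm (t : ℕ → ℝ) (ε : ℕ → Fin 2) (z : ℝ) (k : ℕ) : ℝ :=
  if (t (k + 1) - t (k + 2)) / t (k + 2 - (ε k : ℕ)) < z
  then t (k + 1) - t (k + 2)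
  else t (k + 2 - (ε k : ℕ)) * z

lemma tstar_pos (ht : IsLurothSeq t) (k : ℕ) : 0 < t (k + 2 - (ε k : ℕ)) := by
  apply ht.pos
  have : (ε k : ℕ) ≤ 1 := by omega
  omega

lemma Fterm_nonneg (ht : IsLurothSeq t) (hz : 0 < z) (k : ℕ) : 0 ≤ Fterm t ε z k := by
  rw [Fterm]
  split_ifs
  · exact (a_pos ht (by omega : 1 ≤ k+1)).le
  · exact mul_nonneg (tstar_pos ht k).le hz.le

lemma Fterm_le (ht : IsLurothSeq t) (hz : 0 < z) (k : ℕ) :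
    Fterm t ε z k ≤ t (k+1) - t (k+2) := by
  rw [Fterm]
  split_ifs with h
  · exact le_rfl
  · push_neg at h
    rw [le_div_iff₀ (tstar_pos ht k)] at h
    linarith

lemma Fterm_summable (ht : IsLurothSeq t) (hz : 0 < z) : Summable (Fterm t ε z) :=
  Summable.of_nonneg_of_le (Fterm_nonneg ht hz) (Fterm_le ht hz) (a_summable ht)

lemma F_eq_tsum_Fterm : F t ε z = ∑' k, Fterm t ε z k := rfl

lemma F_nonneg (ht : IsLurothSeq t) (hz : 0 < z) : 0 ≤ F t ε z :=
  tsum_nonneg (Fterm_nonneg ht hz)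

lemma Eset_measure (ht : IsLurothSeq t) (ε : ℕ → Fin 2) (hz : 0 < z) :
    volume (Eset t ε z ∩ Set.Ioc 0 1) = ENNReal.ofReal (F t ε z) := by
  have hset : Eset t ε z ∩ Set.Ioc 0 1 = ⋃ k : ℕ,
      (Set.Ioc (t (k+2)) (t (k+1)) ∩ Tmap t ε ⁻¹'
        (Set.Iio (z * t (k + 2 - (ε k : ℕ)) / (t (k+1) - t (k+2))))) := by
    ext y
    constructor
    · rintro ⟨hE, hy⟩
      have hs := idx_spec ht hy.1 hy.2
      rw [Set.mem_iUnion]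
      refine ⟨idx t y - 1, ?_⟩
      have h2 : idx t y - 1 + 2 = idx t y + 1 := by omega
      have h1 : idx t y - 1 + 1 = idx t y := by omega
      rw [h2, h1]
      refine ⟨hs.2, ?_⟩
      rw [Eset, Set.mem_setOf_eq] at hE
      simp only [Set.mem_preimage, Set.mem_Iio]
      rw [lt_div_iff₀ (a_pos ht hs.1)]
      rw [mul_comm]
      exact hE
    · intro hy
      rw [Set.mem_iUnion] at hy
      rcases hy with ⟨k, ⟨hyA, hyT⟩⟩
      have hidx : idx t y = k + 1 := idx_eq ht (by omega) hyA
      have hyIoc : y ∈ Set.Ioc (0:ℝ) 1 := Ioc_sub ht (by omega) hyA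
      refine ⟨?_, hyIoc⟩
      rw [Eset, Set.mem_setOf_eq, hidx]
      simp only [Set.mem_preimage, Set.mem_Iio] at hyT
      rw [lt_div_iff₀ (a_pos ht (by omega : 1 ≤ k+1))] at hyT
      have h3 : k + 1 + 1 - (ε (k + 1 - 1) : ℕ) = k + 2 - (ε k : ℕ) := by simp
      rw [h3]
      linarith [hyT]
  rw [hset, measure_iUnion ?hd ?hm]
  case hd =>
    exact fun k j hkj => Disjoint.mono Set.inter_subset_left Set.inter_subset_left
      (disjoint_Aks ht hkj)
  case hm =>
    exact fun k => measurableSet_Ioc.inter ((measurable_Tmap ht ε) measurableSet_Iio)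
  have hterm : ∀ k : ℕ,
      volume (Set.Ioc (t (k+2)) (t (k+1)) ∩ Tmap t ε ⁻¹'
        (Set.Iio (z * t (k + 2 - (ε k : ℕ)) / (t (k+1) - t (k+2)))))
      = ENNReal.ofReal (Fterm t ε z k) := by
    intro k
    have ha := a_pos ht (by omega : 1 ≤ k+1)
    have hts := tstar_pos ht (ε := ε) k
    set γ : ℝ := z * t (k + 2 - (ε k : ℕ)) / (t (k+1) - t (k+2)) with hγ
    have hγpos : 0 < γ := by apply div_pos (by positivity) ha
    rw [step_measure ht ε (by omega : 1 ≤ k+1) measurableSet_Iio]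
    rcases le_or_gt γ 1 with h1 | h1
    · have hIio : Set.Iio γ ∩ Set.Ioc (0:ℝ) 1 = Set.Ioo 0 γ := by
        ext u
        simp only [Set.mem_inter_iff, Set.mem_Iio, Set.mem_Ioc, Set.mem_Ioo]
        constructor
        · rintro ⟨h2, h3, h4⟩; exact ⟨h3, h2⟩
        · rintro ⟨h2, h3⟩; exact ⟨h3, h2, le_trans h3.le h1⟩
      rw [hIio, Real.volume_Ioo, ← ENNReal.ofReal_mul ha.le]
      congr 1
      rw [Fterm, if_neg]
      · rw [hγ]; field_simp
        ring
      · push_neg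
        rw [le_div_iff₀ (tstar_pos ht k)]
        rw [hγ, div_le_one ha] at h1
        linarith [h1]
    · have hIio : Set.Iio γ ∩ Set.Ioc (0:ℝ) 1 = Set.Ioc 0 1 := by
        apply Set.inter_eq_self_of_subset_right
        intro u hu
        exact lt_of_le_of_lt hu.2 h1
      rw [hIio, vol_Ioc01, mul_one]
      congr 1
      rw [Fterm, if_pos]
      rw [div_lt_iff₀ (tstar_pos ht k)]
      rw [hγ, lt_div_iff₀ ha] at h1
      linarith [h1]
  calc ∑' k, volume _ = ∑' k, ENNReal.ofReal (Fterm t ε z k) := by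
        congr 1; funext k; exact hterm k
    _ = ENNReal.ofReal (∑' k, Fterm t ε z k) :=
        (ENNReal.ofReal_tsum_of_nonneg (Fterm_nonneg ht hz) (Fterm_summable ht hz)).symm
    _ = ENNReal.ofReal (F t ε z) := by rw [← F_eq_tsum_Fterm]

end XX6


section XX7
variable {t : ℕ → ℝ} {ε : ℕ → Fin 2}

lemma dig_zero_eq_idx (x : ℝ) : dig t ε x 0 = idx t x := rfl

lemma mem_cyl_iff (ht : IsLurothSeq t) (ε : ℕ → Fin 2) :
    ∀ (l : List ℕ), (∀ k ∈ l, 1 ≤ k) → ∀ x ∈ Set.Icc (0:ℝ) 1,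
    (x ∈ cyl t ε l ↔ ∀ i (hi : i < l.length), dig t ε x i = l.get ⟨i, hi⟩) := by
  intro l
  induction l with
  | nil => intro _ x _; simp [cyl]
  | cons k l ih =>
    intro hl x hx
    have hk : 1 ≤ k := hl k (List.mem_cons_self)
    constructor
    · rintro ⟨hA, hT⟩
      have hidx : idx t x = k := idx_eq ht hk hA
      have hTx : Tmap t ε x ∈ Set.Icc (0:ℝ) 1 := Tmap_mem_Icc ht ε hk hA
      have hIH := (ih (fun j hj => hl j (List.mem_cons_of_mem _ hj)) (Tmap t ε x) hTx).1 hT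
      intro i hi
      match i with
      | 0 => exact hidx
      | (i+1) =>
        have := hIH i (by simpa using hi)
        rw [dig_shift] at this
        simpa using this
    · intro hdig
      have h0 : dig t ε x 0 = k := hdig 0 (by simp)
      have hxne : x ≠ 0 := by
        intro h
        rw [h] at h0
        rw [dig_zero_eq_idx] at h0
        rw [(idx_eq_zero_iff ht).2 le_rfl] at h0
        omega
      have hxIoc : x ∈ Set.Ioc (0:ℝ) 1 := ⟨lt_of_le_of_ne hx.1 (Ne.symm hxne), hx.2⟩
      have hs := idx_spec ht hxIoc.1 hxIoc.2
      rw [dig_zero_eq_idx] at h0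
      have hA : x ∈ Set.Ioc (t (k+1)) (t k) := h0 ▸ hs.2
      refine ⟨hA, ?_⟩
      have hTx : Tmap t ε x ∈ Set.Icc (0:ℝ) 1 := Tmap_mem_Icc ht ε hk hA
      apply (ih (fun j hj => hl j (List.mem_cons_of_mem _ hj)) (Tmap t ε x) hTx).2
      intro i hi
      rw [dig_shift]
      have := hdig (i+1) (by simpa using hi)
      simpa using this

noncomputable def beta (t : ℕ → ℝ) : ℝ := max (1 - t 2) (t 2)

lemma beta_nonneg (ht : IsLurothSeq t) : 0 ≤ beta t :=
  le_trans (ht.pos 2 (by omega)).le (le_max_right _ _)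

lemma beta_lt_one (ht : IsLurothSeq t) : beta t < 1 := by
  rw [beta, max_lt_iff]
  have h2 := ht.pos 2 (by omega)
  have h21 : t 2 < 1 := by
    have := ht.anti 1 le_rfl
    rwa [ht.t_one] at this
  constructor <;> linarith

lemma a_le_beta (ht : IsLurothSeq t) {k : ℕ} (hk : 1 ≤ k) : t k - t (k+1) ≤ beta t := by
  rcases eq_or_lt_of_le hk with h | h
  · rw [← h, ht.t_one]
    exact le_max_left _ _
  · have h2 : 2 ≤ k := h
    have ht2 : t k ≤ t 2 := t_mono ht 2 k (by omega) h2
    have := (ht.pos (k+1) (by omega)).le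
    calc t k - t (k+1) ≤ t k := by linarith
      _ ≤ t 2 := ht2
      _ ≤ beta t := le_max_right _ _

lemma approx_err (ht : IsLurothSeq t) (ε : ℕ → Fin 2) {u : ℝ} (hg : Good t ε u) (m : ℕ) :
    |u - approx t ε u m| ≤ beta t ^ m := by
  have hdig := dig_ge_one ht hg
  have hprod : ∏ i ∈ Finset.range m, (t (dig t ε u i) - t (dig t ε u i + 1)) ≤ beta t ^ m := by
    calc ∏ i ∈ Finset.range m, (t (dig t ε u i) - t (dig t ε u i + 1))
        ≤ ∏ i ∈ Finset.range m, beta t := by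
          apply Finset.prod_le_prod
          · exact fun i _ => (a_pos ht (hdig i)).le
          · exact fun i _ => a_le_beta ht (hdig i)
      _ = beta t ^ m := by rw [Finset.prod_const, Finset.card_range]
  have hX : (Tmap t ε)^[m] u ∈ Set.Ioc (0:ℝ) 1 := hg m
  rw [diff_eq ht ε hg m, abs_mul, abs_mul, abs_pow, abs_neg, abs_one, one_pow, one_mul]
  rw [abs_of_pos (Finset.prod_pos (fun i _ => a_pos ht (hdig i))), abs_of_pos hX.1]
  calc (∏ i ∈ Finset.range m, (t (dig t ε u i) - t (dig t ε u i + 1))) * (Tmap t ε)^[m] u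
      ≤ (∏ i ∈ Finset.range m, (t (dig t ε u i) - t (dig t ε u i + 1))) * 1 := by
        apply mul_le_mul_of_nonneg_left hX.2
        exact (Finset.prod_pos (fun i _ => a_pos ht (hdig i))).le
    _ ≤ beta t ^ m := by rw [mul_one]; exact hprod

lemma measurable_dig (ht : IsLurothSeq t) (ε : ℕ → Fin 2) (k : ℕ) :
    Measurable (fun u => dig t ε u k) :=
  (measurable_idx ht).comp ((measurable_Tmap ht ε).iterate k)

lemma measurable_sgn (ht : IsLurothSeq t) (ε : ℕ → Fin 2) (k : ℕ) :
    Measurable (fun u => sgn t ε u k) :=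
  (measurable_from_nat (f := fun d => (ε (d - 1) : ℕ))).comp (measurable_dig ht ε k)

lemma measurable_approx (ht : IsLurothSeq t) (ε : ℕ → Fin 2) (m : ℕ) :
    Measurable (fun u => approx t ε u m) := by
  apply Finset.measurable_sum
  intro k _
  apply Measurable.mul
  · exact (measurable_from_nat (f := fun n : ℕ => (-1:ℝ)^n)).comp
      (Finset.measurable_sum _ (fun i _ => measurable_sgn ht ε i))
  · apply Measurable.mul
    · exact (measurable_from_nat (f := fun d => t (d + 1 - (ε (d - 1) : ℕ)))).comp
        (measurable_dig ht ε k)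
    · exact Finset.measurable_prod _ (fun i _ =>
        (measurable_from_nat (f := fun d => t d - t (d+1))).comp (measurable_dig ht ε i))

end XX7


section Combine

lemma sum_range_mul_split (M K : ℕ) (u : ℕ → ℝ) :
    ∑ n ∈ Finset.range (M*K), u n = ∑ r ∈ Finset.range M, ∑ j ∈ Finset.range K, u (r + j*M) := by
  induction K with
  | zero => simp
  | succ K ih =>
    have h1 : M * (K+1) = M*K + M := by ring
    rw [h1, Finset.sum_range_add, ih]
    have h2 : ∀ r ∈ Finset.range M, ∑ j ∈ Finset.range (K+1), u (r + j*M)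
        = (∑ j ∈ Finset.range K, u (r + j*M)) + u (r + K*M) := fun r _ =>
      Finset.sum_range_succ _ K
    rw [Finset.sum_congr rfl h2, Finset.sum_add_distrib]
    congr 1
    apply Finset.sum_congr rfl
    intro r _
    congr 1
    ring

open Filter Topology in
lemma combine_residues {M : ℕ} (hM : 0 < M) (u : ℕ → ℝ)
    (hu0 : ∀ n, 0 ≤ u n) (hu1 : ∀ n, u n ≤ 1) {L : ℝ}
    (h : ∀ r < M, Tendsto (fun J : ℕ => (∑ j ∈ Finset.range J, u (r + j*M))/(J:ℝ)) atTop (𝓝 L)) :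
    Tendsto (fun N : ℕ => (∑ n ∈ Finset.range N, u n)/(N:ℝ)) atTop (𝓝 L) := by
  have hA : Tendsto (fun K : ℕ => (∑ n ∈ Finset.range (M*K), u n) / ((M*K : ℕ) : ℝ))
      atTop (𝓝 L) := by
    have hlim : Tendsto (fun K : ℕ =>
        (∑ r ∈ Finset.range M, (∑ j ∈ Finset.range K, u (r + j*M))/(K:ℝ))/(M:ℝ))
        atTop (𝓝 L) := by
      have hsum : Tendsto (fun K : ℕ => ∑ r ∈ Finset.range M,
          (∑ j ∈ Finset.range K, u (r + j*M))/(K:ℝ))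
          atTop (𝓝 (∑ _r ∈ Finset.range M, L)) :=
        tendsto_finset_sum _ (fun r hr => h r (Finset.mem_range.1 hr))
      have hc : (∑ _r ∈ Finset.range M, L) = M * L := by
        rw [Finset.sum_const, Finset.card_range, nsmul_eq_mul]
      rw [hc] at hsum
      have := hsum.div_const (M : ℝ)
      rwa [mul_div_cancel_left₀ _ (by positivity : (M:ℝ) ≠ 0)] at this
    apply Tendsto.congr _ hlim
    intro K
    rw [sum_range_mul_split M K u, ← Finset.sum_div, Nat.cast_mul, mul_comm (M:ℝ) (K:ℝ), div_div]
  have hKtop : Tendsto (fun N : ℕ => N / M) atTop atTop :=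
    Filter.tendsto_atTop_atTop.2 (fun b => ⟨b * M, fun N hN => (Nat.le_div_iff_mul_le hM).2 hN⟩)
  have hcomp : Tendsto (fun N : ℕ =>
      (∑ n ∈ Finset.range (M*(N/M)), u n) / ((M*(N/M) : ℕ) : ℝ)) atTop (𝓝 L) :=
    hA.comp hKtop
  have herr : Tendsto (fun N : ℕ => (∑ n ∈ Finset.range N, u n)/(N:ℝ)
      - (∑ n ∈ Finset.range (M*(N/M)), u n) / ((M*(N/M) : ℕ) : ℝ)) atTop (𝓝 0) := by
    have hb : ∀ᶠ N : ℕ in atTop, ‖(∑ n ∈ Finset.range N, u n)/(N:ℝ)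
        - (∑ n ∈ Finset.range (M*(N/M)), u n) / ((M*(N/M) : ℕ) : ℝ)‖ ≤ (2*M:ℝ)/(N:ℝ) := by
      filter_upwards [eventually_ge_atTop M] with N hN
      have hK1 : 1 ≤ N / M := (Nat.le_div_iff_mul_le hM).2 (by omega)
      have hMK : M * (N/M) ≤ N := Nat.mul_div_le N M
      have hNlt : N < M * (N/M) + M := by
        have h1 := Nat.div_add_mod N M
        have h2 := Nat.mod_lt N hM
        omega
      set x : ℝ := ∑ n ∈ Finset.range (M*(N/M)), u n with hx
      set e : ℝ := (∑ n ∈ Finset.range N, u n) - x with he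
      have hsum_eq : (∑ n ∈ Finset.range N, u n) = x + e := by rw [he]; ring
      set p : ℝ := ((M*(N/M) : ℕ) : ℝ) with hp'
      have hp : (0:ℝ) < p := by
        rw [hp']
        have : 0 < M * (N/M) := by positivity
        exact_mod_cast this
      have hn : (0:ℝ) < (N:ℝ) := by
        have : 0 < N := by omega
        exact_mod_cast this
      have hx0 : 0 ≤ x := Finset.sum_nonneg (fun n _ => hu0 n)
      have hxp : x ≤ p := by
        rw [hx, hp']
        calc ∑ n ∈ Finset.range (M*(N/M)), u n ≤ ∑ _n ∈ Finset.range (M*(N/M)), (1:ℝ) :=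
              Finset.sum_le_sum (fun n _ => hu1 n)
          _ = ((M*(N/M):ℕ):ℝ) := by simp
      have he0 : 0 ≤ e := by
        rw [he, hx, ← Finset.sum_range_add_sum_Ico u hMK]
        have : (0:ℝ) ≤ ∑ n ∈ Finset.Ico (M*(N/M)) N, u n :=
          Finset.sum_nonneg (fun n _ => hu0 n)
        linarith
      have heM : e ≤ M := by
        rw [he, hx, ← Finset.sum_range_add_sum_Ico u hMK]
        have h1 : ∑ n ∈ Finset.Ico (M*(N/M)) N, u n ≤ ((N - M*(N/M) : ℕ) : ℝ) := by
          calc ∑ n ∈ Finset.Ico (M*(N/M)) N, u n ≤ ∑ _n ∈ Finset.Ico (M*(N/M)) N, (1:ℝ) :=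
                Finset.sum_le_sum (fun n _ => hu1 n)
            _ = ((N - M*(N/M) : ℕ) : ℝ) := by rw [Finset.sum_const, Nat.card_Ico]; simp
        have h2 : ((N - M*(N/M) : ℕ) : ℝ) ≤ M := by
          have : N - M*(N/M) ≤ M := by omega
          exact_mod_cast this
        linarith
      have hpn : p ≤ (N:ℝ) := by rw [hp']; exact_mod_cast hMK
      have hnp : (N:ℝ) ≤ p + M := by
        rw [hp']
        have : (N:ℝ) < ((M * (N/M) + M : ℕ) : ℝ) := by exact_mod_cast hNlt
        push_cast at this ⊢
        linarith
      rw [hsum_eq, Real.norm_eq_abs]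
      have hdiff : (x + e)/(N:ℝ) - x/p = (e*p - x*((N:ℝ)-p))/((N:ℝ)*p) := by
        field_simp
        ring
      rw [hdiff, abs_div, abs_of_pos (mul_pos hn hp), div_le_div_iff₀ (mul_pos hn hp) hn]
      have habs : |e*p - x*((N:ℝ)-p)| ≤ 2*M*p := by
        have h1 : |e*p - x*((N:ℝ)-p)| ≤ |e*p| + |x*((N:ℝ)-p)| := abs_sub _ _
        have h2 : |e*p| = e*p := abs_of_nonneg (mul_nonneg he0 hp.le)
        have h3 : |x*((N:ℝ)-p)| = x*((N:ℝ)-p) :=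
          abs_of_nonneg (mul_nonneg hx0 (by linarith))
        nlinarith [mul_le_mul_of_nonneg_right heM hp.le, mul_le_mul hxp (by linarith : (N:ℝ)-p ≤ M) (by linarith) hp.le]
      nlinarith [mul_le_mul_of_nonneg_right habs hn.le, mul_pos (mul_pos hn hp) hn]
    have h0 : Tendsto (fun N : ℕ => (2*M : ℝ)/(N:ℝ)) atTop (𝓝 0) :=
      tendsto_const_div_atTop_nhds_zero_nat (2*(M:ℝ))
    exact squeeze_zero_norm' hb h0
  have := hcomp.add herr
  rw [add_zero] at this
  apply this.congr
  intro N
  ring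
end Combine


section XX9
open ProbabilityTheory
variable {t : ℕ → ℝ} {ε : ℕ → Fin 2}

noncomputable def wvec (t : ℕ → ℝ) (ε : ℕ → Fin 2) (M : ℕ) : ℝ → (Fin M → ℕ) :=
  fun x i => dig t ε x i

lemma measurable_wvec (ht : IsLurothSeq t) (ε : ℕ → Fin 2) (M : ℕ) :
    Measurable (wvec t ε M) :=
  measurable_pi_lambda _ (fun i => measurable_dig ht ε i)

lemma good_null (ht : IsLurothSeq t) (ε : ℕ → Fin 2) :
    volume ({x : ℝ | ¬ Good t ε x} ∩ Set.Ioc 0 1) = 0 := by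
  have h := good_ae ht ε
  rw [MeasureTheory.ae_iff, MeasureTheory.Measure.restrict_apply' measurableSet_Ioc] at h
  exact h

lemma instProb : MeasureTheory.IsProbabilityMeasure (volume.restrict (Set.Ioc (0:ℝ) 1)) := by
  constructor
  rw [MeasureTheory.Measure.restrict_apply_univ, vol_Ioc01]

lemma cyl_sub_Ioc (ht : IsLurothSeq t) (ε : ℕ → Fin 2) {M : ℕ} (hM : 0 < M)
    {v : Fin M → ℕ} (hv : ∀ i, 1 ≤ v i) :
    cyl t ε (List.ofFn v) ⊆ Set.Ioc (0:ℝ) 1 := by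
  obtain ⟨m, rfl⟩ : ∃ m, M = m + 1 := ⟨M - 1, by omega⟩
  rw [List.ofFn_succ]
  exact (Set.inter_subset_left).trans (Ioc_sub ht (hv 0))

lemma ofFn_pos {M : ℕ} {v : Fin M → ℕ} (hv : ∀ i, 1 ≤ v i) :
    ∀ k ∈ List.ofFn v, 1 ≤ k := by
  intro k hk
  rw [List.mem_ofFn] at hk
  rcases hk with ⟨i, rfl⟩
  exact hv i

lemma cylF_mem (ht : IsLurothSeq t) (ε : ℕ → Fin 2) {M : ℕ}
    {v : Fin M → ℕ} (hv : ∀ i, 1 ≤ v i) {x : ℝ} (hx : x ∈ Set.Icc (0:ℝ) 1) :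
    x ∈ cyl t ε (List.ofFn v) ↔ wvec t ε M x = v := by
  rw [mem_cyl_iff ht ε (List.ofFn v) (ofFn_pos hv) x hx]
  constructor
  · intro h
    funext i
    have hi : (i : ℕ) < (List.ofFn v).length := by rw [List.length_ofFn]; exact i.isLt
    have h2 := h i hi
    rw [List.get_ofFn] at h2
    exact h2
  · intro h i hi
    rw [List.get_ofFn]
    have hiM : i < M := by rwa [List.length_ofFn] at hi
    exact congrFun h ⟨i, hiM⟩

lemma cyl_prod_measure (ht : IsLurothSeq t) (ε : ℕ → Fin 2) {M : ℕ}
    {v : Fin M → ℕ} (hv : ∀ i, 1 ≤ v i) :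
    (volume.restrict (Set.Ioc (0:ℝ) 1)) (cyl t ε (List.ofFn v))
      = ENNReal.ofReal (((List.ofFn v).map (fun k => t k - t (k+1))).prod) := by
  rw [MeasureTheory.Measure.restrict_apply (measurableSet_cyl ht ε _)]
  have h := cyl_measure ht ε (List.ofFn v) (ofFn_pos hv) MeasurableSet.univ
  simp only [Set.preimage_univ, Set.inter_univ, Set.univ_inter] at h
  rw [h, vol_Ioc01, mul_one]

lemma wpre_inter (ht : IsLurothSeq t) (ε : ℕ → Fin 2) {M : ℕ} (hM : 0 < M)
    (A : Set (Fin M → ℕ)) {V : Set ℝ} (hV : MeasurableSet V) :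
    (volume.restrict (Set.Ioc (0:ℝ) 1)) (wvec t ε M ⁻¹' A ∩ V)
      = ∑' v : {v : Fin M → ℕ // v ∈ A ∧ ∀ i, 1 ≤ v i},
          (volume.restrict (Set.Ioc (0:ℝ) 1)) (cyl t ε (List.ofFn (v : Fin M → ℕ)) ∩ V) := by
  have h1 : (wvec t ε M ⁻¹' A : Set ℝ)
      =ᵐ[volume.restrict (Set.Ioc (0:ℝ) 1)]
        ((⋃ v : {v : Fin M → ℕ // v ∈ A ∧ ∀ i, 1 ≤ v i},
          cyl t ε (List.ofFn (v : Fin M → ℕ))) : Set ℝ) := by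
    rw [Filter.eventuallyEq_set]
    filter_upwards [good_ae ht ε, MeasureTheory.ae_restrict_mem measurableSet_Ioc]
      with x hg hx
    constructor
    · intro hA
      have hv : ∀ i : Fin M, 1 ≤ wvec t ε M x i := fun i => dig_ge_one ht hg i
      rw [Set.mem_iUnion]
      exact ⟨⟨wvec t ε M x, hA, hv⟩,
        (cylF_mem ht ε hv ⟨hx.1.le, hx.2⟩).2 rfl⟩
    · intro hU
      rw [Set.mem_iUnion] at hU
      rcases hU with ⟨⟨v, hvA, hv⟩, hcyl⟩
      have hwx := (cylF_mem ht ε hv ⟨hx.1.le, hx.2⟩).1 hcyl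
      rw [Set.mem_preimage, hwx]
      exact hvA
  have hae := h1.inter (Filter.EventuallyEq.refl _ (V : Set ℝ))
  rw [measure_congr hae, Set.iUnion_inter]
  rw [MeasureTheory.measure_iUnion ?hd ?hm]
  case hd =>
    rintro ⟨v, hvA, hv⟩ ⟨v', hvA', hv'⟩ hne
    apply Set.disjoint_left.2
    rintro x ⟨hx1, _⟩ ⟨hx2, _⟩
    have hxIoc : x ∈ Set.Ioc (0:ℝ) 1 := cyl_sub_Ioc ht ε hM hv hx1
    have hh1 := (cylF_mem ht ε hv ⟨hxIoc.1.le, hxIoc.2⟩).1 hx1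
    have hh2 := (cylF_mem ht ε hv' ⟨hxIoc.1.le, hxIoc.2⟩).1 hx2
    have hvv : v = v' := by rw [← hh1, ← hh2]
    exact hne (Subtype.ext hvv)
  case hm =>
    exact fun v => (measurableSet_cyl ht ε _).inter hV

lemma wpre_measure (ht : IsLurothSeq t) (ε : ℕ → Fin 2) {M : ℕ} (hM : 0 < M)
    (A : Set (Fin M → ℕ)) :
    (volume.restrict (Set.Ioc (0:ℝ) 1)) (wvec t ε M ⁻¹' A)
      = ∑' v : {v : Fin M → ℕ // v ∈ A ∧ ∀ i, 1 ≤ v i},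
          ENNReal.ofReal (((List.ofFn (v : Fin M → ℕ)).map (fun k => t k - t (k+1))).prod) := by
  have h := wpre_inter ht ε hM A MeasurableSet.univ
  simp only [Set.inter_univ] at h
  rw [h]
  exact tsum_congr (fun v => cyl_prod_measure ht ε v.2.2)

lemma master_indep (ht : IsLurothSeq t) (ε : ℕ → Fin 2) {M : ℕ} (hM : 0 < M)
    (A B : Set (Fin M → ℕ)) {Δ : ℕ} (hΔ : M ≤ Δ) :
    (volume.restrict (Set.Ioc (0:ℝ) 1))
        (wvec t ε M ⁻¹' A ∩ (Tmap t ε)^[Δ] ⁻¹' (wvec t ε M ⁻¹' B))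
      = (volume.restrict (Set.Ioc (0:ℝ) 1)) (wvec t ε M ⁻¹' A)
        * (volume.restrict (Set.Ioc (0:ℝ) 1)) (wvec t ε M ⁻¹' B) := by
  have hmw : Measurable (wvec t ε M) := measurable_wvec ht ε M
  have hB : MeasurableSet (wvec t ε M ⁻¹' B) := hmw (B.to_countable.measurableSet)
  have hitmeas : ∀ r : ℕ, Measurable ((Tmap t ε)^[r]) :=
    fun r => (measurable_Tmap ht ε).iterate r
  have hV : MeasurableSet ((Tmap t ε)^[Δ] ⁻¹' (wvec t ε M ⁻¹' B)) := (hitmeas Δ) hB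
  rw [wpre_inter ht ε hM A hV]
  have hco : (Tmap t ε)^[Δ] = (Tmap t ε)^[Δ - M] ∘ (Tmap t ε)^[M] := by
    rw [← Function.iterate_add, (by omega : Δ - M + M = Δ)]
  have hU : MeasurableSet ((Tmap t ε)^[Δ - M] ⁻¹' (wvec t ε M ⁻¹' B)) := (hitmeas (Δ-M)) hB
  have hterm : ∀ v : {v : Fin M → ℕ // v ∈ A ∧ ∀ i, 1 ≤ v i},
      (volume.restrict (Set.Ioc (0:ℝ) 1))
          (cyl t ε (List.ofFn (v : Fin M → ℕ)) ∩ (Tmap t ε)^[Δ] ⁻¹' (wvec t ε M ⁻¹' B))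
        = ENNReal.ofReal (((List.ofFn (v : Fin M → ℕ)).map (fun k => t k - t (k+1))).prod)
          * (volume.restrict (Set.Ioc (0:ℝ) 1)) (wvec t ε M ⁻¹' B) := by
    rintro ⟨v, hvA, hv⟩
    rw [MeasureTheory.Measure.restrict_apply ((measurableSet_cyl ht ε _).inter hV)]
    rw [hco, Set.preimage_comp]
    have hlen := List.length_ofFn (f := v)
    have hcm := cyl_measure ht ε (List.ofFn v) (ofFn_pos hv) hU
    rw [hlen] at hcm
    rw [hcm]
    congr 1
    rw [← MeasureTheory.Measure.restrict_apply hU]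
    exact ((Tmp ht ε).iterate (Δ - M)).measure_preimage hB.nullMeasurableSet
  rw [tsum_congr hterm, ENNReal.tsum_mul_right, ← wpre_measure ht ε hM A]

lemma indep_comp (ht : IsLurothSeq t) (ε : ℕ → Fin 2) {M : ℕ} (hM : 0 < M)
    (G₁ G₂ : (Fin M → ℕ) → ℝ) {n₁ n₂ : ℕ} (hle : n₁ + M ≤ n₂) :
    IndepFun (fun x => G₁ (wvec t ε M ((Tmap t ε)^[n₁] x)))
      (fun x => G₂ (wvec t ε M ((Tmap t ε)^[n₂] x)))
      (volume.restrict (Set.Ioc (0:ℝ) 1)) := by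
  rw [indepFun_iff_measure_inter_preimage_eq_mul]
  intro S1 S2 _ _
  have hmw : Measurable (wvec t ε M) := measurable_wvec ht ε M
  have hitm : ∀ r : ℕ, Measurable ((Tmap t ε)^[r]) :=
    fun r => (measurable_Tmap ht ε).iterate r
  have hAm : MeasurableSet (wvec t ε M ⁻¹' (G₁ ⁻¹' S1)) :=
    hmw ((G₁ ⁻¹' S1).to_countable.measurableSet)
  have hBm : MeasurableSet (wvec t ε M ⁻¹' (G₂ ⁻¹' S2)) :=
    hmw ((G₂ ⁻¹' S2).to_countable.measurableSet)
  have hp1 : (fun x => G₁ (wvec t ε M ((Tmap t ε)^[n₁] x))) ⁻¹' S1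
      = (Tmap t ε)^[n₁] ⁻¹' (wvec t ε M ⁻¹' (G₁ ⁻¹' S1)) := rfl
  have hp2 : (fun x => G₂ (wvec t ε M ((Tmap t ε)^[n₂] x))) ⁻¹' S2
      = (Tmap t ε)^[n₂] ⁻¹' (wvec t ε M ⁻¹' (G₂ ⁻¹' S2)) := rfl
  have hco : (Tmap t ε)^[n₂] = (Tmap t ε)^[n₂ - n₁] ∘ (Tmap t ε)^[n₁] := by
    rw [← Function.iterate_add, (by omega : n₂ - n₁ + n₁ = n₂)]
  rw [hp1, hp2, hco, Set.preimage_comp, ← Set.preimage_inter]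
  rw [((Tmp ht ε).iterate n₁).measure_preimage
    ((hAm.inter ((hitm (n₂ - n₁)) hBm)).nullMeasurableSet)]
  rw [((Tmp ht ε).iterate n₁).measure_preimage hAm.nullMeasurableSet]
  rw [((Tmp ht ε).iterate n₁).measure_preimage (((hitm (n₂ - n₁)) hBm)).nullMeasurableSet]
  rw [((Tmp ht ε).iterate (n₂ - n₁)).measure_preimage hBm.nullMeasurableSet]
  exact master_indep ht ε hM _ _ (by omega)

lemma ident_comp (ht : IsLurothSeq t) (ε : ℕ → Fin 2) {M : ℕ}
    (G : (Fin M → ℕ) → ℝ) (n₁ n₂ : ℕ) :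
    ProbabilityTheory.IdentDistrib (fun x => G (wvec t ε M ((Tmap t ε)^[n₁] x)))
      (fun x => G (wvec t ε M ((Tmap t ε)^[n₂] x)))
      (volume.restrict (Set.Ioc (0:ℝ) 1)) (volume.restrict (Set.Ioc (0:ℝ) 1)) := by
  have hmw : Measurable (wvec t ε M) := measurable_wvec ht ε M
  have hG : Measurable G := measurable_of_countable G
  have hmeas : ∀ r : ℕ, Measurable (fun x => G (wvec t ε M ((Tmap t ε)^[r] x))) :=
    fun r => (hG.comp hmw).comp ((measurable_Tmap ht ε).iterate r)
  refine ⟨(hmeas n₁).aemeasurable, (hmeas n₂).aemeasurable, ?_⟩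
  have hmap : ∀ r : ℕ, MeasureTheory.Measure.map (fun x => G (wvec t ε M ((Tmap t ε)^[r] x)))
      (volume.restrict (Set.Ioc (0:ℝ) 1))
      = MeasureTheory.Measure.map (G ∘ wvec t ε M) (volume.restrict (Set.Ioc (0:ℝ) 1)) := by
    intro r
    have hc : (fun x => G (wvec t ε M ((Tmap t ε)^[r] x)))
        = (G ∘ wvec t ε M) ∘ (Tmap t ε)^[r] := rfl
    rw [hc, ← MeasureTheory.Measure.map_map (hG.comp hmw) ((measurable_Tmap ht ε).iterate r)]
    rw [((Tmp ht ε).iterate r).map_eq]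
  rw [hmap n₁, hmap n₂]

end XX9


section XX10
variable {t : ℕ → ℝ} {ε : ℕ → Fin 2}

noncomputable def Gapp (t : ℕ → ℝ) (ε : ℕ → Fin 2) (m : ℕ) (d : ℕ → ℕ) : ℝ :=
  ∑ k ∈ Finset.range m, (-1:ℝ)^(∑ i ∈ Finset.range k, (ε (d (i+1) - 1) : ℕ)) *
    (t (d (k+1) + 1 - (ε (d (k+1) - 1) : ℕ)) *
      ∏ i ∈ Finset.range k, (t (d (i+1)) - t (d (i+1) + 1)))

lemma Gapp_dig (m : ℕ) (y : ℝ) :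
    Gapp t ε m (dig t ε y) = approx t ε (Tmap t ε y) m := by
  rw [Gapp, approx]
  apply Finset.sum_congr rfl
  intro k _
  have hd : ∀ i, dig t ε (Tmap t ε y) i = dig t ε y (i+1) := fun i => dig_shift y i
  have hs : ∀ i, sgn t ε (Tmap t ε y) i = (ε (dig t ε y (i+1) - 1) : ℕ) := by
    intro i; rw [sgn, hd]
  simp only [hd, hs]

lemma Gapp_congr {m : ℕ} {d d' : ℕ → ℕ} (h : ∀ i ≤ m, d i = d' i) :
    Gapp t ε m d = Gapp t ε m d' := by
  rw [Gapp, Gapp]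
  apply Finset.sum_congr rfl
  intro k hk
  rw [Finset.mem_range] at hk
  have hk1 : d (k+1) = d' (k+1) := h (k+1) (by omega)
  rw [hk1]
  congr 1
  · congr 1
    exact Finset.sum_congr rfl (fun i hi => by
      rw [Finset.mem_range] at hi
      rw [h (i+1) (by omega)])
  · congr 1
    exact Finset.prod_congr rfl (fun i hi => by
      rw [Finset.mem_range] at hi
      rw [h (i+1) (by omega)])

def extv {M : ℕ} (v : Fin M → ℕ) : ℕ → ℕ := fun i => if h : i < M then v ⟨i, h⟩ else 0

noncomputable def SA (t : ℕ → ℝ) (ε : ℕ → Fin 2) (z σ : ℝ) (m : ℕ) : Set (Fin (m+1) → ℕ) :=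
  {v | (t (extv v 0) - t (extv v 0 + 1)) * Gapp t ε m (extv v) + σ
        < z * t (extv v 0 + 1 - (ε (extv v 0 - 1) : ℕ))}

lemma extv_wvec {m : ℕ} (y : ℝ) {i : ℕ} (hi : i ≤ m) :
    extv (wvec t ε (m+1) y) i = dig t ε y i := by
  rw [extv, dif_pos (by omega : i < m+1)]
  rfl

lemma mem_SA_iff {m : ℕ} {z σ : ℝ} (y : ℝ) :
    wvec t ε (m+1) y ∈ SA t ε z σ m ↔
      (t (dig t ε y 0) - t (dig t ε y 0 + 1)) * approx t ε (Tmap t ε y) m + σ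
        < z * t (dig t ε y 0 + 1 - (ε (dig t ε y 0 - 1) : ℕ)) := by
  rw [SA, Set.mem_setOf_eq]
  rw [extv_wvec y (by omega : 0 ≤ m)]
  rw [Gapp_congr (fun i hi => extv_wvec y hi), Gapp_dig]

lemma sandwich_low (ht : IsLurothSeq t) (ε : ℕ → Fin 2) {z : ℝ} {y : ℝ}
    (hy : y ∈ Set.Ioc (0:ℝ) 1) (hg : Good t ε y) (m : ℕ)
    (h : wvec t ε (m+1) y ∈ SA t ε z (beta t ^ m) m) : y ∈ Eset t ε z := by
  rw [mem_SA_iff] at h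
  have hd0 : dig t ε y 0 = idx t y := rfl
  rw [hd0] at h
  have hidx1 : 1 ≤ idx t y := (idx_spec ht hy.1 hy.2).1
  have ha := a_pos ht hidx1
  have ha1 := a_le_one ht hidx1
  have herr := approx_err ht ε (good_Tmap hg) m
  have hb : (0:ℝ) ≤ beta t ^ m := pow_nonneg (beta_nonneg ht) m
  rw [abs_le] at herr
  rw [Eset, Set.mem_setOf_eq]
  nlinarith [mul_le_mul_of_nonneg_left herr.2 ha.le,
    mul_le_mul_of_nonneg_right ha1 hb]

lemma sandwich_high (ht : IsLurothSeq t) (ε : ℕ → Fin 2) {z : ℝ} {y : ℝ}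
    (hy : y ∈ Set.Ioc (0:ℝ) 1) (hg : Good t ε y) (m : ℕ)
    (h : y ∈ Eset t ε z) : wvec t ε (m+1) y ∈ SA t ε z (-(beta t ^ m)) m := by
  rw [mem_SA_iff]
  have hd0 : dig t ε y 0 = idx t y := rfl
  rw [hd0]
  have hidx1 : 1 ≤ idx t y := (idx_spec ht hy.1 hy.2).1
  have ha := a_pos ht hidx1
  have ha1 := a_le_one ht hidx1
  have herr := approx_err ht ε (good_Tmap hg) m
  have hb : (0:ℝ) ≤ beta t ^ m := pow_nonneg (beta_nonneg ht) m
  rw [abs_le] at herr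
  rw [Eset, Set.mem_setOf_eq] at h
  nlinarith [mul_le_mul_of_nonneg_left herr.1 ha.le,
    mul_le_mul_of_nonneg_right ha1 hb]

lemma SA_mono {z σ σ' : ℝ} {m : ℕ} (h : σ' ≤ σ) :
    SA t ε z σ m ⊆ SA t ε z σ' m := by
  intro v hv
  rw [SA, Set.mem_setOf_eq] at hv ⊢
  linarith

end XX10


section XX11
open ProbabilityTheory
variable {t : ℕ → ℝ} {ε : ℕ → Fin 2} {z : ℝ}

lemma min_summable (ht : IsLurothSeq t) {c : ℝ} (hc : 0 ≤ c) :
    Summable (fun k : ℕ => min (t (k+1) - t (k+2)) c) :=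
  Summable.of_nonneg_of_le
    (fun k => le_min (a_pos ht (by omega : 1 ≤ k+1)).le hc)
    (fun k => min_le_left _ _) (a_summable ht)

lemma gap_bound (ht : IsLurothSeq t) (ε : ℕ → Fin 2) (hz : 0 < z) (m : ℕ) :
    (volume.restrict (Set.Ioc (0:ℝ) 1))
        (wvec t ε (m+1) ⁻¹' SA t ε z (-(beta t ^ m)) m
          \ wvec t ε (m+1) ⁻¹' SA t ε z (beta t ^ m) m)
      ≤ ENNReal.ofReal (∑' k, min (t (k+1) - t (k+2)) (4 * beta t ^ m)) := by
  have hb : (0:ℝ) ≤ beta t ^ m := pow_nonneg (beta_nonneg ht) m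
  set b := beta t ^ m with hbdef
  set D := wvec t ε (m+1) ⁻¹' SA t ε z (-b) m \ wvec t ε (m+1) ⁻¹' SA t ε z b m with hD
  set C : ℕ → Set ℝ := fun k => {u : ℝ | (t (k+1) - t (k+2)) * approx t ε u m
      ∈ Set.Icc (z * t (k+2-(ε k : ℕ)) - b) (z * t (k+2-(ε k : ℕ)) + b)} with hC
  have hCm : ∀ k, MeasurableSet (C k) := by
    intro k
    exact ((measurable_approx ht ε m).const_mul _) measurableSet_Icc
  have hsub : D ∩ Set.Ioc 0 1
      ⊆ ⋃ k : ℕ, (Set.Ioc (t (k+2)) (t (k+1)) ∩ Tmap t ε ⁻¹' (C k)) := by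
    rintro y ⟨⟨hyS, hynS⟩, hy⟩
    rw [Set.mem_preimage, mem_SA_iff] at hyS
    rw [Set.mem_preimage, mem_SA_iff] at hynS
    have hd0 : dig t ε y 0 = idx t y := rfl
    rw [hd0] at hyS hynS
    have hs := idx_spec ht hy.1 hy.2
    rw [Set.mem_iUnion]
    refine ⟨idx t y - 1, ?_, ?_⟩
    · have h2 : idx t y - 1 + 2 = idx t y + 1 := by omega
      have h1 : idx t y - 1 + 1 = idx t y := by omega
      rw [h2, h1]
      exact hs.2
    · rw [Set.mem_preimage, hC]
      have h2 : idx t y - 1 + 2 = idx t y + 1 := by omega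
      have h1 : idx t y - 1 + 1 = idx t y := by omega
      simp only [Set.mem_setOf_eq, h1, h2, Set.mem_Icc]
      push_neg at hynS
      constructor
      · linarith [hynS]
      · linarith [hyS]
  have hres : (volume.restrict (Set.Ioc (0:ℝ) 1)) D = volume (D ∩ Set.Ioc 0 1) :=
    MeasureTheory.Measure.restrict_apply' measurableSet_Ioc
  rw [hres]
  calc volume (D ∩ Set.Ioc 0 1)
      ≤ volume (⋃ k : ℕ, (Set.Ioc (t (k+2)) (t (k+1)) ∩ Tmap t ε ⁻¹' (C k))) :=
        measure_mono hsub
    _ ≤ ∑' k : ℕ, volume (Set.Ioc (t (k+2)) (t (k+1)) ∩ Tmap t ε ⁻¹' (C k)) :=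
        measure_iUnion_le _
    _ ≤ ∑' k : ℕ, ENNReal.ofReal (min (t (k+1) - t (k+2)) (4 * b)) := by
        apply ENNReal.tsum_le_tsum
        intro k
        rw [step_measure ht ε (by omega : 1 ≤ k+1) (hCm k)]
        have ha := a_pos ht (by omega : 1 ≤ k+1)
        have ha1 := a_le_one ht (by omega : 1 ≤ k+1)
        rcases le_total (t (k+1) - t (k+2)) (4*b) with hcase | hcase
        · calc ENNReal.ofReal (t (k+1) - t (k+2)) * volume (C k ∩ Set.Ioc 0 1)
              ≤ ENNReal.ofReal (t (k+1) - t (k+2)) * volume (Set.Ioc (0:ℝ) 1) :=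
                mul_le_mul_right (measure_mono Set.inter_subset_right) _
            _ = ENNReal.ofReal (t (k+1) - t (k+2)) := by rw [vol_Ioc01, mul_one]
            _ = ENNReal.ofReal (min (t (k+1) - t (k+2)) (4*b)) := by rw [min_eq_left hcase]
        · have hvol : volume (C k ∩ Set.Ioc 0 1)
              ≤ ENNReal.ofReal (4*b/(t (k+1) - t (k+2))) := by
            have hsub2 : C k ∩ Set.Ioc 0 1
                ⊆ ({x : ℝ | ¬ Good t ε x} ∩ Set.Ioc 0 1)
                  ∪ Set.Icc ((z * t (k+2-(ε k : ℕ)) - 2*b)/(t (k+1) - t (k+2)))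
                      ((z * t (k+2-(ε k : ℕ)) + 2*b)/(t (k+1) - t (k+2))) := by
              rintro u ⟨huC, hu⟩
              by_cases hgu : Good t ε u
              · right
                rw [hC, Set.mem_setOf_eq, Set.mem_Icc] at huC
                have herr := approx_err ht ε hgu m
                rw [abs_le] at herr
                have hu1 : (Tmap t ε)^[0] u ∈ Set.Ioc (0:ℝ) 1 := hgu 0
                simp only [Function.iterate_zero, id] at hu1
                constructor
                · rw [div_le_iff₀ ha]
                  nlinarith [huC.1, herr.1, herr.2, mul_le_mul_of_nonneg_right ha1 hb]
                · rw [le_div_iff₀ ha]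
                  nlinarith [huC.2, herr.1, herr.2, mul_le_mul_of_nonneg_right ha1 hb]
              · left
                exact ⟨hgu, hu⟩
            calc volume (C k ∩ Set.Ioc 0 1)
                ≤ volume ({x : ℝ | ¬ Good t ε x} ∩ Set.Ioc 0 1)
                  + volume (Set.Icc ((z * t (k+2-(ε k : ℕ)) - 2*b)/(t (k+1) - t (k+2)))
                      ((z * t (k+2-(ε k : ℕ)) + 2*b)/(t (k+1) - t (k+2)))) :=
                  le_trans (measure_mono hsub2) (measure_union_le _ _)
              _ = volume (Set.Icc ((z * t (k+2-(ε k : ℕ)) - 2*b)/(t (k+1) - t (k+2)))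
                      ((z * t (k+2-(ε k : ℕ)) + 2*b)/(t (k+1) - t (k+2)))) := by
                  rw [good_null ht ε, zero_add]
              _ ≤ ENNReal.ofReal (4*b/(t (k+1) - t (k+2))) := by
                  rw [Real.volume_Icc]
                  apply ENNReal.ofReal_le_ofReal
                  rw [div_sub_div_same]
                  have h4 : z * t (k+2-(ε k : ℕ)) + 2*b - (z * t (k+2-(ε k : ℕ)) - 2*b)
                      = 4*b := by ring
                  rw [h4]
          calc ENNReal.ofReal (t (k+1) - t (k+2)) * volume (C k ∩ Set.Ioc 0 1)
              ≤ ENNReal.ofReal (t (k+1) - t (k+2)) * ENNReal.ofReal (4*b/(t (k+1) - t (k+2))) :=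
                mul_le_mul_right hvol _
            _ = ENNReal.ofReal ((t (k+1) - t (k+2)) * (4*b/(t (k+1) - t (k+2)))) :=
                (ENNReal.ofReal_mul ha.le).symm
            _ = ENNReal.ofReal (4*b) := by
                congr 1
                field_simp
            _ = ENNReal.ofReal (min (t (k+1) - t (k+2)) (4*b)) := by rw [min_eq_right hcase]
    _ = ENNReal.ofReal (∑' k, min (t (k+1) - t (k+2)) (4 * b)) :=
        (ENNReal.ofReal_tsum_of_nonneg
          (fun k => le_min (a_pos ht (by omega : 1 ≤ k+1)).le (by positivity))
          (min_summable ht (by positivity))).symm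

lemma SAlow_le (ht : IsLurothSeq t) (ε : ℕ → Fin 2) (hz : 0 < z) (m : ℕ) :
    (volume.restrict (Set.Ioc (0:ℝ) 1)) (wvec t ε (m+1) ⁻¹' SA t ε z (beta t ^ m) m)
      ≤ ENNReal.ofReal (F t ε z) := by
  rw [MeasureTheory.Measure.restrict_apply' measurableSet_Ioc]
  have hsub : wvec t ε (m+1) ⁻¹' SA t ε z (beta t ^ m) m ∩ Set.Ioc 0 1
      ⊆ (Eset t ε z ∩ Set.Ioc 0 1) ∪ ({x : ℝ | ¬ Good t ε x} ∩ Set.Ioc 0 1) := by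
    rintro y ⟨hyS, hy⟩
    by_cases hg : Good t ε y
    · exact Or.inl ⟨sandwich_low ht ε hy hg m hyS, hy⟩
    · exact Or.inr ⟨hg, hy⟩
  calc volume (wvec t ε (m+1) ⁻¹' SA t ε z (beta t ^ m) m ∩ Set.Ioc 0 1)
      ≤ volume (Eset t ε z ∩ Set.Ioc 0 1) + volume ({x : ℝ | ¬ Good t ε x} ∩ Set.Ioc 0 1) :=
        le_trans (measure_mono hsub) (measure_union_le _ _)
    _ = ENNReal.ofReal (F t ε z) := by
        rw [good_null ht ε, add_zero, Eset_measure ht ε hz]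

lemma SAhigh_ge (ht : IsLurothSeq t) (ε : ℕ → Fin 2) (hz : 0 < z) (m : ℕ) :
    ENNReal.ofReal (F t ε z)
      ≤ (volume.restrict (Set.Ioc (0:ℝ) 1)) (wvec t ε (m+1) ⁻¹' SA t ε z (-(beta t ^ m)) m) := by
  rw [MeasureTheory.Measure.restrict_apply' measurableSet_Ioc]
  have hsub : Eset t ε z ∩ Set.Ioc 0 1
      ⊆ (wvec t ε (m+1) ⁻¹' SA t ε z (-(beta t ^ m)) m ∩ Set.Ioc 0 1)
        ∪ ({x : ℝ | ¬ Good t ε x} ∩ Set.Ioc 0 1) := by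
    rintro y ⟨hyE, hy⟩
    by_cases hg : Good t ε y
    · exact Or.inl ⟨sandwich_high ht ε hy hg m hyE, hy⟩
    · exact Or.inr ⟨hg, hy⟩
  calc ENNReal.ofReal (F t ε z) = volume (Eset t ε z ∩ Set.Ioc 0 1) :=
        (Eset_measure ht ε hz).symm
    _ ≤ volume (wvec t ε (m+1) ⁻¹' SA t ε z (-(beta t ^ m)) m ∩ Set.Ioc 0 1)
        + volume ({x : ℝ | ¬ Good t ε x} ∩ Set.Ioc 0 1) :=
        le_trans (measure_mono hsub) (measure_union_le _ _)
    _ = volume (wvec t ε (m+1) ⁻¹' SA t ε z (-(beta t ^ m)) m ∩ Set.Ioc 0 1) := by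
        rw [good_null ht ε, add_zero]

open Filter Topology in
lemma em_tendsto (ht : IsLurothSeq t) :
    Tendsto (fun m : ℕ => ∑' k, min (t (k+1) - t (k+2)) (4 * beta t ^ m)) atTop (𝓝 0) := by
  have h := tendsto_tsum_of_dominated_convergence (𝓕 := atTop)
    (f := fun (m : ℕ) (k : ℕ) => min (t (k+1) - t (k+2)) (4 * beta t ^ m))
    (g := fun _ => (0:ℝ)) (bound := fun k => t (k+1) - t (k+2))
    (a_summable ht) ?_ ?_
  · simpa using h
  · intro k
    have h4 : Tendsto (fun m : ℕ => 4 * beta t ^ m) atTop (𝓝 0) := by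
      have := (tendsto_pow_atTop_nhds_zero_of_lt_one (beta_nonneg ht) (beta_lt_one ht)).const_mul 4
      simpa using this
    have := (tendsto_const_nhds (x := t (k+1) - t (k+2)) (f := (atTop : Filter ℕ))).min h4
    rwa [min_eq_right (a_pos ht (by omega : 1 ≤ k+1)).le] at this
  · filter_upwards with m k
    have hb : (0:ℝ) ≤ beta t ^ m := pow_nonneg (beta_nonneg ht) m
    rw [Real.norm_eq_abs, abs_of_nonneg (le_min (a_pos ht (by omega : 1 ≤ k+1)).le (by positivity))]
    exact min_le_left _ _

end XX11


section XX12
open ProbabilityTheory Filter Topology MeasureTheory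
variable {t : ℕ → ℝ} {ε : ℕ → Fin 2}

lemma indicator_abs_le {M : ℕ} (AS : Set (Fin M → ℕ)) (v : Fin M → ℕ) :
    |Set.indicator AS (fun _ => (1:ℝ)) v| ≤ 1 := by
  by_cases h : v ∈ AS
  · rw [Set.indicator_of_mem h]; norm_num
  · rw [Set.indicator_of_notMem h]; norm_num

lemma indicator_nonneg' {M : ℕ} (AS : Set (Fin M → ℕ)) (v : Fin M → ℕ) :
    0 ≤ Set.indicator AS (fun _ => (1:ℝ)) v := by
  by_cases h : v ∈ AS
  · rw [Set.indicator_of_mem h]; norm_num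
  · rw [Set.indicator_of_notMem h]

lemma class_slln (ht : IsLurothSeq t) (ε : ℕ → Fin 2) {M : ℕ} (hM : 0 < M)
    (AS : Set (Fin M → ℕ)) (r : ℕ) :
    ∀ᵐ x ∂(volume.restrict (Set.Ioc (0:ℝ) 1)),
      Tendsto (fun J : ℕ => (∑ j ∈ Finset.range J,
          Set.indicator AS (fun _ => (1:ℝ)) (wvec t ε M ((Tmap t ε)^[r + j*M] x)))/(J:ℝ))
        atTop
        (𝓝 (((volume.restrict (Set.Ioc (0:ℝ) 1)) (wvec t ε M ⁻¹' AS)).toReal)) := by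
  haveI := instProb
  set G : (Fin M → ℕ) → ℝ := Set.indicator AS (fun _ => (1:ℝ)) with hG
  set X : ℕ → ℝ → ℝ := fun j x => G (wvec t ε M ((Tmap t ε)^[r + j*M] x)) with hX
  have hGm : Measurable G := measurable_of_countable G
  have hmw : Measurable (wvec t ε M) := measurable_wvec ht ε M
  have hXm : ∀ j, Measurable (X j) :=
    fun j => (hGm.comp hmw).comp ((measurable_Tmap ht ε).iterate (r + j*M))
  have hint : Integrable (X 0) (volume.restrict (Set.Ioc (0:ℝ) 1)) := by
    apply (integrable_const (1:ℝ)).mono' (hXm 0).aestronglyMeasurable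
    apply ae_of_all
    intro x
    rw [Real.norm_eq_abs]
    exact indicator_abs_le AS _
  have hindep : Pairwise (Function.onFun (fun a b => IndepFun a b (volume.restrict (Set.Ioc (0:ℝ) 1))) X) := by
    intro i j hij
    rcases lt_or_gt_of_ne hij with hlt | hlt
    · exact indep_comp ht ε hM G G (by
        have := Nat.mul_le_mul_right M (by omega : i+1 ≤ j)
        have h2 : (i+1)*M = i*M + M := by ring
        omega)
    · exact (indep_comp ht ε hM G G (by
        have := Nat.mul_le_mul_right M (by omega : j+1 ≤ i)
        have h2 : (j+1)*M = j*M + M := by ring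
        omega)).symm
  have hident : ∀ j, IdentDistrib (X j) (X 0)
      (volume.restrict (Set.Ioc (0:ℝ) 1)) (volume.restrict (Set.Ioc (0:ℝ) 1)) :=
    fun j => ident_comp ht ε G (r + j*M) (r + 0*M)
  have h := strong_law_ae_real X hint hindep hident
  have hval : ∫ x, X 0 x ∂(volume.restrict (Set.Ioc (0:ℝ) 1))
      = ((volume.restrict (Set.Ioc (0:ℝ) 1)) (wvec t ε M ⁻¹' AS)).toReal := by
    have h1 : ∫ x, X 0 x ∂(volume.restrict (Set.Ioc (0:ℝ) 1))
        = ∫ y, (G ∘ wvec t ε M) y ∂(volume.restrict (Set.Ioc (0:ℝ) 1)) := by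
      have hc : X 0 = fun x => (G ∘ wvec t ε M) ((Tmap t ε)^[r + 0*M] x) := rfl
      rw [hc]
      rw [← MeasureTheory.integral_map
        ((measurable_Tmap ht ε).iterate (r + 0*M)).aemeasurable
        ((hGm.comp hmw).aestronglyMeasurable.mono_ac
          (((Tmp ht ε).iterate (r + 0*M)).map_eq.le.absolutelyContinuous))]
      rw [((Tmp ht ε).iterate (r + 0*M)).map_eq]
    rw [h1]
    have h2 : (G ∘ wvec t ε M)
        = Set.indicator (wvec t ε M ⁻¹' AS) (fun _ => (1:ℝ)) := by
      funext y
      by_cases hmem : wvec t ε M y ∈ AS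
      · rw [Function.comp_apply, hG, Set.indicator_of_mem hmem,
          Set.indicator_of_mem (Set.mem_preimage.2 hmem)]
      · rw [Function.comp_apply, hG, Set.indicator_of_notMem hmem,
          Set.indicator_of_notMem (fun hc => hmem (Set.mem_preimage.1 hc))]
    rw [h2]
    exact MeasureTheory.integral_indicator_one (hmw (AS.to_countable.measurableSet))
  filter_upwards [h] with x hx
  rw [← hval]
  exact hx

lemma avg_tendsto (ht : IsLurothSeq t) (ε : ℕ → Fin 2) {M : ℕ} (hM : 0 < M)
    (AS : Set (Fin M → ℕ)) :
    ∀ᵐ x ∂(volume.restrict (Set.Ioc (0:ℝ) 1)),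
      Tendsto (fun N : ℕ => (∑ n ∈ Finset.range N,
          Set.indicator AS (fun _ => (1:ℝ)) (wvec t ε M ((Tmap t ε)^[n] x)))/(N:ℝ))
        atTop
        (𝓝 (((volume.restrict (Set.Ioc (0:ℝ) 1)) (wvec t ε M ⁻¹' AS)).toReal)) := by
  have hall := (MeasureTheory.ae_all_iff).2
    (fun r : Fin M => class_slln ht ε hM AS r.val)
  filter_upwards [hall] with x hx
  apply combine_residues hM
  · intro n; exact indicator_nonneg' AS _
  · intro n; exact le_trans (le_abs_self _) (indicator_abs_le AS _)
  · intro r hr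
    exact hx ⟨r, hr⟩

end XX12


section XX13
open Filter Topology MeasureTheory
variable {t : ℕ → ℝ} {ε : ℕ → Fin 2}

lemma count_eq (ht : IsLurothSeq t) (ε : ℕ → Fin 2) (z : ℝ) {x : ℝ} (hg : Good t ε x) (N : ℕ) :
    ({n : ℕ | n ∈ Finset.Icc 1 N ∧ theta t ε x n < z}.ncard : ℝ)
      = ∑ k ∈ Finset.range N,
          Set.indicator (Eset t ε z) (fun _ => (1:ℝ)) ((Tmap t ε)^[k] x) := by
  classical
  have hset : {n : ℕ | n ∈ Finset.Icc 1 N ∧ theta t ε x n < z}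
      = ↑((Finset.Icc 1 N).filter (fun n => theta t ε x n < z)) := by
    ext n; simp [Finset.mem_filter]
  rw [hset, Set.ncard_coe_finset]
  have hmap : Finset.Icc 1 N
      = (Finset.range N).map ⟨fun k => k+1, add_left_injective 1⟩ := by
    ext n
    simp only [Finset.mem_Icc, Finset.mem_map, Finset.mem_range, Function.Embedding.coeFn_mk]
    constructor
    · rintro ⟨h1, h2⟩; exact ⟨n-1, by omega, by omega⟩
    · rintro ⟨k, hk, rfl⟩; omega
  rw [hmap, Finset.filter_map, Finset.card_map, Finset.card_filter]
  push_cast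
  simp only [Function.comp_apply, Function.Embedding.coeFn_mk]
  apply Finset.sum_congr rfl
  intro k _
  have hiff := theta_lt_iff ht ε (z := z) hg k
  by_cases hE : (Tmap t ε)^[k] x ∈ Eset t ε z
  · rw [Set.indicator_of_mem hE, if_pos (hiff.2 hE)]
  · rw [Set.indicator_of_notMem hE, if_neg (fun hc => hE (hiff.1 hc))]

lemma div_nat_mono {a b : ℝ} (h : a ≤ b) (N : ℕ) : a / (N:ℝ) ≤ b / (N:ℝ) := by
  rcases Nat.eq_zero_or_pos N with rfl | hN
  · simp
  · have hN' : (0:ℝ) < N := by exact_mod_cast hN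
    gcongr



/-- For every `ε ∈ {0,1}^ℕ` and every `z ∈ (0,1]`, for Lebesgue-a.e.
`x ∈ [0,1]` the limit `lim_N (1/N)·#{1 ≤ n ≤ N : θ_n^ε(x) < z}` exists and
equals `F_ε(z)`. -/
theorem luroth_cdf (t : ℕ → ℝ) (ht : IsLurothSeq t) (ε : ℕ → Fin 2)
    (z : ℝ) (hz : z ∈ Set.Ioc (0 : ℝ) 1) :
    ∀ᵐ x ∂(volume.restrict (Set.Icc (0 : ℝ) 1)),
      Tendsto (fun N : ℕ =>
          ({n : ℕ | n ∈ Finset.Icc 1 N ∧ theta t ε x n < z}.ncard : ℝ) / N)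
        atTop (nhds (F t ε z)) := by
  have hz0 : 0 < z := hz.1
  haveI := instProb
  have hμ : volume.restrict (Set.Icc (0:ℝ) 1) = volume.restrict (Set.Ioc (0:ℝ) 1) :=
    (Measure.restrict_congr_set Ioc_ae_eq_Icc).symm
  rw [hμ]
  set em : ℕ → ℝ := fun m => ∑' k, min (t (k+1) - t (k+2)) (4 * beta t ^ m) with hem
  have hemnn : ∀ m, 0 ≤ em m := by
    intro m
    apply tsum_nonneg
    intro k
    exact le_min (a_pos ht (by omega : 1 ≤ k+1)).le
      (mul_nonneg (by norm_num) (pow_nonneg (beta_nonneg ht) m))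
  have hFnn := F_nonneg (ε := ε) ht hz0
  -- expectation bounds
  have hPbounds : ∀ m : ℕ,
      ((volume.restrict (Set.Ioc (0:ℝ) 1))
          (wvec t ε (m+1) ⁻¹' SA t ε z (-(beta t ^ m)) m)).toReal ≤ F t ε z + em m
      ∧ F t ε z - em m ≤ ((volume.restrict (Set.Ioc (0:ℝ) 1))
          (wvec t ε (m+1) ⁻¹' SA t ε z (beta t ^ m) m)).toReal := by
    intro m
    set μ := volume.restrict (Set.Ioc (0:ℝ) 1)
    have hfin : ∀ S : Set ℝ, μ S ≠ ⊤ := fun S => measure_ne_top μ S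
    have hglue : μ (wvec t ε (m+1) ⁻¹' SA t ε z (-(beta t ^ m)) m)
        ≤ μ (wvec t ε (m+1) ⁻¹' SA t ε z (beta t ^ m) m) + ENNReal.ofReal (em m) := by
      calc μ (wvec t ε (m+1) ⁻¹' SA t ε z (-(beta t ^ m)) m)
          ≤ μ (wvec t ε (m+1) ⁻¹' SA t ε z (-(beta t ^ m)) m
                ∩ wvec t ε (m+1) ⁻¹' SA t ε z (beta t ^ m) m)
            + μ (wvec t ε (m+1) ⁻¹' SA t ε z (-(beta t ^ m)) m
                \ wvec t ε (m+1) ⁻¹' SA t ε z (beta t ^ m) m) :=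
            measure_le_inter_add_diff _ _ _
        _ ≤ μ (wvec t ε (m+1) ⁻¹' SA t ε z (beta t ^ m) m) + ENNReal.ofReal (em m) :=
            add_le_add (measure_mono Set.inter_subset_right) (gap_bound ht ε hz0 m)
    constructor
    · have h1 : μ (wvec t ε (m+1) ⁻¹' SA t ε z (-(beta t ^ m)) m)
          ≤ ENNReal.ofReal (F t ε z) + ENNReal.ofReal (em m) :=
        le_trans hglue (add_le_add (SAlow_le ht ε hz0 m) le_rfl)
      have h2 := ENNReal.toReal_mono (by finiteness) h1
      rw [← ENNReal.ofReal_add hFnn (hemnn m), ENNReal.toReal_ofReal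
        (by linarith [hFnn, hemnn m])] at h2
      exact h2
    · have h1 : ENNReal.ofReal (F t ε z)
          ≤ μ (wvec t ε (m+1) ⁻¹' SA t ε z (beta t ^ m) m) + ENNReal.ofReal (em m) :=
        le_trans (SAhigh_ge ht ε hz0 m) hglue
      have h2 := ENNReal.toReal_mono
        (by exact ENNReal.add_ne_top.2 ⟨hfin _, ENNReal.ofReal_ne_top⟩) h1
      rw [ENNReal.toReal_ofReal hFnn, ENNReal.toReal_add (hfin _) ENNReal.ofReal_ne_top,
        ENNReal.toReal_ofReal (hemnn m)] at h2
      linarith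
  -- a.e. assembly
  filter_upwards [good_ae ht ε,
    (MeasureTheory.ae_all_iff).2
      (fun m : ℕ => avg_tendsto ht ε (Nat.succ_pos m) (SA t ε z (beta t ^ m) m)),
    (MeasureTheory.ae_all_iff).2
      (fun m : ℕ => avg_tendsto ht ε (Nat.succ_pos m) (SA t ε z (-(beta t ^ m)) m))]
    with x hg hlo hhi
  set q : ℕ → ℝ := fun N =>
    (∑ k ∈ Finset.range N,
      Set.indicator (Eset t ε z) (fun _ => (1:ℝ)) ((Tmap t ε)^[k] x))/(N:ℝ) with hq
  have hqeq : (fun N : ℕ =>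
      ({n : ℕ | n ∈ Finset.Icc 1 N ∧ theta t ε x n < z}.ncard : ℝ) / N) = q := by
    funext N
    rw [hq, count_eq ht ε z hg N]
  rw [hqeq]
  -- pointwise sandwich
  have hsand : ∀ m : ℕ, ∀ k : ℕ,
      Set.indicator (SA t ε z (beta t ^ m) m) (fun _ => (1:ℝ))
          (wvec t ε (m+1) ((Tmap t ε)^[k] x))
        ≤ Set.indicator (Eset t ε z) (fun _ => (1:ℝ)) ((Tmap t ε)^[k] x)
      ∧ Set.indicator (Eset t ε z) (fun _ => (1:ℝ)) ((Tmap t ε)^[k] x)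
        ≤ Set.indicator (SA t ε z (-(beta t ^ m)) m) (fun _ => (1:ℝ))
          (wvec t ε (m+1) ((Tmap t ε)^[k] x)) := by
    intro m k
    have hy : (Tmap t ε)^[k] x ∈ Set.Ioc (0:ℝ) 1 := hg k
    have hgy : Good t ε ((Tmap t ε)^[k] x) := good_iterate hg k
    constructor
    · by_cases hmem : wvec t ε (m+1) ((Tmap t ε)^[k] x) ∈ SA t ε z (beta t ^ m) m
      · rw [Set.indicator_of_mem hmem,
          Set.indicator_of_mem (sandwich_low ht ε hy hgy m hmem)]
      · rw [Set.indicator_of_notMem hmem]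
        exact Set.indicator_nonneg (fun _ _ => zero_le_one) _
    · by_cases hmem : (Tmap t ε)^[k] x ∈ Eset t ε z
      · rw [Set.indicator_of_mem hmem,
          Set.indicator_of_mem (sandwich_high ht ε hy hgy m hmem)]
      · rw [Set.indicator_of_notMem hmem]
        exact Set.indicator_nonneg (fun _ _ => zero_le_one) _
  have hqlow : ∀ m N,
      (∑ n ∈ Finset.range N, Set.indicator (SA t ε z (beta t ^ m) m) (fun _ => (1:ℝ))
        (wvec t ε (m+1) ((Tmap t ε)^[n] x)))/(N:ℝ) ≤ q N := by
    intro m N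
    exact div_nat_mono (Finset.sum_le_sum (fun k _ => (hsand m k).1)) N
  have hqhigh : ∀ m N, q N ≤
      (∑ n ∈ Finset.range N, Set.indicator (SA t ε z (-(beta t ^ m)) m) (fun _ => (1:ℝ))
        (wvec t ε (m+1) ((Tmap t ε)^[n] x)))/(N:ℝ) := by
    intro m N
    exact div_nat_mono (Finset.sum_le_sum (fun k _ => (hsand m k).2)) N
  -- boundedness of q
  have hq0 : ∀ N, 0 ≤ q N := by
    intro N
    apply div_nonneg _ (Nat.cast_nonneg N)
    exact Finset.sum_nonneg (fun k _ => Set.indicator_nonneg (fun _ _ => zero_le_one) _)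
  have hq1 : ∀ N, q N ≤ 1 := by
    intro N
    rcases Nat.eq_zero_or_pos N with rfl | hN
    · simp [hq]
    · rw [hq]
      rw [div_le_one (by exact_mod_cast hN)]
      calc ∑ k ∈ Finset.range N,
            Set.indicator (Eset t ε z) (fun _ => (1:ℝ)) ((Tmap t ε)^[k] x)
          ≤ ∑ _k ∈ Finset.range N, (1:ℝ) := by
            apply Finset.sum_le_sum
            intro k _
            by_cases hE : (Tmap t ε)^[k] x ∈ Eset t ε z
            · rw [Set.indicator_of_mem hE]
            · rw [Set.indicator_of_notMem hE]; norm_num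
        _ = (N:ℝ) := by simp
  have hbdd_le : IsBoundedUnder (· ≤ ·) atTop q := isBoundedUnder_of ⟨1, hq1⟩
  have hbdd_ge : IsBoundedUnder (· ≥ ·) atTop q := isBoundedUnder_of ⟨0, hq0⟩
  -- limsup bound
  have hsup : limsup q atTop ≤ F t ε z := by
    have hstep : ∀ m : ℕ, limsup q atTop ≤ F t ε z + em m := by
      intro m
      have h1 : limsup q atTop ≤ limsup (fun N =>
          (∑ n ∈ Finset.range N, Set.indicator (SA t ε z (-(beta t ^ m)) m) (fun _ => (1:ℝ))
            (wvec t ε (m+1) ((Tmap t ε)^[n] x)))/(N:ℝ)) atTop := by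
        exact limsup_le_limsup (Filter.Eventually.of_forall (hqhigh m))
          hbdd_ge.isCoboundedUnder_le ((hhi m).isBoundedUnder_le)
      rw [(hhi m).limsup_eq] at h1
      exact le_trans h1 (hPbounds m).1
    have htendF : Tendsto (fun m : ℕ => F t ε z + em m) atTop (𝓝 (F t ε z)) := by
      have := (tendsto_const_nhds (x := F t ε z) (f := (atTop : Filter ℕ))).add (em_tendsto ht)
      simpa using this
    exact ge_of_tendsto' htendF hstep
  -- liminf bound
  have hinf : F t ε z ≤ liminf q atTop := by
    have hstep : ∀ m : ℕ, F t ε z - em m ≤ liminf q atTop := by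
      intro m
      have h1 : liminf (fun N =>
          (∑ n ∈ Finset.range N, Set.indicator (SA t ε z (beta t ^ m) m) (fun _ => (1:ℝ))
            (wvec t ε (m+1) ((Tmap t ε)^[n] x)))/(N:ℝ)) atTop ≤ liminf q atTop := by
        exact liminf_le_liminf (Filter.Eventually.of_forall (hqlow m))
          ((hlo m).isBoundedUnder_ge) hbdd_le.isCoboundedUnder_ge
      rw [(hlo m).liminf_eq] at h1
      exact le_trans (hPbounds m).2 h1
    have htendF : Tendsto (fun m : ℕ => F t ε z - em m) atTop (𝓝 (F t ε z)) := by
      have := (tendsto_const_nhds (x := F t ε z) (f := (atTop : Filter ℕ))).sub (em_tendsto ht)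
      simpa using this
    exact le_of_tendsto' htendF hstep
  exact tendsto_of_le_liminf_of_limsup_le hinf hsup hbdd_le hbdd_ge

end XX13
end

section
/- For every α-Lüroth partition, M_{0̄} > M_{1̄}, where 0̄ and 1̄ denote the constant sequences of 0's and 1's respectively. -/
open MeasureTheory Filter Topology

/-- Concatenation `ωε` of a finite word `ω ∈ {0,1}^n` with a sequence `ε ∈ {0,1}^ℕ`. -/
def cat {n : ℕ} (w : Fin n → Fin 2) (ε : ℕ → Fin 2) : ℕ → Fin 2 :=
  fun k => if h : k < n then w ⟨k, h⟩ else ε (k - n)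

/-- The interval `I_ω = [M_{ω1̄}, M_{ω0̄}]`. -/
noncomputable def Iword (t : ℕ → ℝ) {n : ℕ} (w : Fin n → Fin 2) : Set ℝ :=
  Set.Icc (Mavg t (cat w fun _ => 1)) (Mavg t (cat w fun _ => 0))

/-- The set `𝓜 = {M_ε : ε ∈ {0,1}^ℕ}`. -/
noncomputable def calM (t : ℕ → ℝ) : Set ℝ :=
  Set.range (Mavg t)

/-- The quantity `g(k) = ∫_[0,1] (f_k^1 - f_k^0) dλ`. -/
noncomputable def gseq (t : ℕ → ℝ) (k : ℕ) : ℝ :=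
  if t (k + 1) / t k ≤ 1 / 2 then
    t k / 2 - t (k + 1) / 2 - (t (k + 1)) ^ 2 / (2 * t k)
  else
    (t k) ^ 2 / (2 * t (k + 1)) - (t (k + 1)) ^ 2 / (2 * t k)
      + 3 * t (k + 1) / 2 - 3 * t k / 2

/-- The gap/overlap function `G(n) = g(n+1) - Σ_{k ≥ n+2} g(k)`. -/
noncomputable def Gseq (t : ℕ → ℝ) (n : ℕ) : ℝ :=
  gseq t (n + 1) - ∑' k : ℕ, gseq t (n + 2 + k)

/-- The common length `I(n)` of the intervals `I_ω` for `ω ∈ {0,1}^n`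
(computed from the all-zeros word `ω = 0^n`). -/
noncomputable def Ilen (t : ℕ → ℝ) (n : ℕ) : ℝ :=
  Mavg t (fun _ => 0) - Mavg t (fun k => if k < n then 0 else 1)

/-- A Cantor set in `ℝ`: a nonempty compact set with empty interior and
no isolated points. -/
def IsCantorSet (S : Set ℝ) : Prop :=
  S.Nonempty ∧ IsCompact S ∧ interior S = ∅ ∧ ∀ x ∈ S, AccPt x (Filter.principal S)

section Aux
variable {t : ℕ → ℝ}

lemma apos (ht : IsLurothSeq t) (n : ℕ) : 0 < t (n + 1) - t (n + 2) :=
  sub_pos.2 (ht.anti (n + 1) (by omega))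

lemma summable_a (ht : IsLurothSeq t) :
    Summable (fun n => t (n + 1) - t (n + 2)) := by
  apply summable_of_sum_range_le (c := 1) (fun n => (apos ht n).le)
  intro n
  rw [Finset.sum_range_sub' (fun i => t (i + 1)) n]
  have := ht.pos (n + 1) (by omega)
  simp only [ht.t_one] at *
  linarith

lemma tsum_a (ht : IsLurothSeq t) : ∑' n, (t (n + 1) - t (n + 2)) = 1 := by
  have h1 : Tendsto (fun n => ∑ i ∈ Finset.range n, (t (i + 1) - t (i + 2)))
      atTop (nhds 1) := by
    have heq : ∀ n, ∑ i ∈ Finset.range n, (t (i + 1) - t (i + 2)) = t 1 - t (n + 1) :=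
      fun n => Finset.sum_range_sub' (fun i => t (i + 1)) n
    simp only [heq, ht.t_one]
    have h2 : Tendsto (fun n => t (n + 1)) atTop (nhds 0) :=
      ht.tendsto_zero.comp (tendsto_add_atTop_nat 1)
    simpa using tendsto_const_nhds.sub h2
  exact tendsto_nhds_unique ((summable_a ht).hasSum.tendsto_sum_nat) h1

/-- general: positive scaling sequence -/
lemma hmax_nonneg (a c z : ℝ) : 0 ≤ max (a - c * z) 0 := le_max_right _ _

lemma hmax_le (ht : IsLurothSeq t) {c : ℝ} (hc : 0 ≤ c) (n : ℕ) {z : ℝ} (hz : 0 ≤ z) :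
    max ((t (n + 1) - t (n + 2)) - c * z) 0 ≤ t (n + 1) - t (n + 2) := by
  apply max_le _ (apos ht n).le
  nlinarith

lemma integ (a c : ℝ) :
    Integrable (fun z => max (a - c * z) 0)
      (volume.restrict (Set.Icc (0:ℝ) 1)) := by
  have : Continuous (fun z : ℝ => max (a - c * z) 0) := by continuity
  exact this.integrableOn_Icc

lemma Jle (ht : IsLurothSeq t) {c : ℝ} (hc : 0 ≤ c) (n : ℕ) :
    ∫ z in Set.Icc (0:ℝ) 1, max ((t (n + 1) - t (n + 2)) - c * z) 0
      ≤ t (n + 1) - t (n + 2) := by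
  have h := setIntegral_mono_on (integ _ c) (integrable_const _) measurableSet_Icc
    (fun z hz => hmax_le ht hc n hz.1)
  simpa [Real.volume_Icc] using h

lemma Jnonneg (a c : ℝ) :
    0 ≤ ∫ z in Set.Icc (0:ℝ) 1, max (a - c * z) 0 :=
  integral_nonneg (fun z => le_max_right _ _)

lemma Jsummable (ht : IsLurothSeq t) {c : ℕ → ℝ} (hc : ∀ n, 0 ≤ c n) :
    Summable (fun n => ∫ z in Set.Icc (0:ℝ) 1,
      max ((t (n + 1) - t (n + 2)) - c n * z) 0) :=
  Summable.of_nonneg_of_le (fun n => Jnonneg _ _) (fun n => Jle ht (hc n) n)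
    (summable_a ht)

lemma Mavg_eq (ht : IsLurothSeq t) (ε : ℕ → Fin 2) :
    Mavg t ε = ∑' n, ∫ z in Set.Icc (0:ℝ) 1,
      max ((t (n + 1) - t (n + 2)) - t (n + 2 - (ε n : ℕ)) * z) 0 := by
  have hspos : ∀ n, 0 < t (n + 2 - (ε n : ℕ)) := by
    intro n
    have := Fin.is_le (ε n)
    exact ht.pos _ (by omega)
  have hcongr : ∀ z ∈ Set.Icc (0:ℝ) 1,
      1 - F t ε z = ∑' n, max ((t (n + 1) - t (n + 2)) - t (n + 2 - (ε n : ℕ)) * z) 0 := by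
    intro z hz
    have hsummax : Summable (fun n =>
        max ((t (n + 1) - t (n + 2)) - t (n + 2 - (ε n : ℕ)) * z) 0) := by
      refine Summable.of_nonneg_of_le (fun n => le_max_right _ _)
        (fun n => hmax_le ht (hspos n).le n hz.1) (summable_a ht)
    have hFz : F t ε z = ∑' n, ((t (n + 1) - t (n + 2))
        - max ((t (n + 1) - t (n + 2)) - t (n + 2 - (ε n : ℕ)) * z) 0) := by
      unfold F
      refine tsum_congr fun n => ?_
      by_cases h : (t (n + 1) - t (n + 2)) / t (n + 2 - (ε n : ℕ)) < z
      · rw [if_pos h]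
        have h2 : (t (n + 1) - t (n + 2)) - t (n + 2 - (ε n : ℕ)) * z ≤ 0 := by
          have := (div_lt_iff₀ (hspos n)).mp h
          nlinarith
        rw [max_eq_right h2]
        ring
      · rw [if_neg h]
        push_neg at h
        have h2 : 0 ≤ (t (n + 1) - t (n + 2)) - t (n + 2 - (ε n : ℕ)) * z := by
          have := (le_div_iff₀ (hspos n)).mp h
          nlinarith
        rw [max_eq_left h2]
        ring
    rw [hFz, Summable.tsum_sub (summable_a ht) hsummax, tsum_a ht]
    ring
  calc Mavg t ε
      = ∫ z in Set.Icc (0:ℝ) 1, ∑' n,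
          max ((t (n + 1) - t (n + 2)) - t (n + 2 - (ε n : ℕ)) * z) 0 :=
        setIntegral_congr_fun measurableSet_Icc hcongr
    _ = ∑' n, ∫ z in Set.Icc (0:ℝ) 1,
          max ((t (n + 1) - t (n + 2)) - t (n + 2 - (ε n : ℕ)) * z) 0 := by
        refine (integral_tsum_of_summable_integral_norm (fun n => integ _ _) ?_).symm
        have : ∀ n, (∫ z in Set.Icc (0:ℝ) 1,
            ‖max ((t (n + 1) - t (n + 2)) - t (n + 2 - (ε n : ℕ)) * z) 0‖)
            = ∫ z in Set.Icc (0:ℝ) 1,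
            max ((t (n + 1) - t (n + 2)) - t (n + 2 - (ε n : ℕ)) * z) 0 := by
          intro n
          refine integral_congr_ae (ae_of_all _ fun z => ?_)
          exact Real.norm_of_nonneg (le_max_right _ _)
        simp only [this]
        exact Jsummable ht (fun n => (hspos n).le)

end Aux

/-- For every α-Lüroth partition, `M_{0̄} > M_{1̄}`. -/
theorem Mavg_zero_gt_one (t : ℕ → ℝ) (ht : IsLurothSeq t) :
    Mavg t (fun _ => 1) < Mavg t (fun _ => 0) := by
  rw [Mavg_eq ht, Mavg_eq ht]
  have hidx : ∀ n : ℕ, n + 2 - 1 = n + 1 := fun n => rfl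
  simp only [Fin.val_one, Fin.val_zero, hidx, Nat.sub_zero]
  have ht1 : ∀ n, 0 < t (n + 1) := fun n => ht.pos _ (by omega)
  -- termwise inequality
  have hle : ∀ n, (∫ z in Set.Icc (0:ℝ) 1, max ((t (n + 1) - t (n + 2)) - t (n + 1) * z) 0)
      ≤ ∫ z in Set.Icc (0:ℝ) 1, max ((t (n + 1) - t (n + 2)) - t (n + 2) * z) 0 := by
    intro n
    refine setIntegral_mono_on (integ _ _) (integ _ _) measurableSet_Icc fun z hz => ?_
    have : t (n + 2) * z ≤ t (n + 1) * z :=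
      mul_le_mul_of_nonneg_right (ht.anti (n + 1) (by omega)).le hz.1
    exact max_le_max (by linarith) le_rfl
  -- strict at n = 0
  have hi : (∫ z in Set.Icc (0:ℝ) 1, max ((t 1 - t 2) - t 1 * z) 0)
      < ∫ z in Set.Icc (0:ℝ) 1, max ((t 1 - t 2) - t 2 * z) 0 := by
    have hd : 0 < ∫ z in Set.Icc (0:ℝ) 1,
        (max ((t 1 - t 2) - t 2 * z) 0 - max ((t 1 - t 2) - t 1 * z) 0) := by
      set f : ℝ → ℝ := fun z =>
        max ((t 1 - t 2) - t 2 * z) 0 - max ((t 1 - t 2) - t 1 * z) 0 with hf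
      have ha0 : 0 < t 1 - t 2 := apos ht 0
      have ht2 : 0 < t 2 := ht.pos 2 (by omega)
      have h21 : t 2 < t 1 := ht.anti 1 le_rfl
      have hfi : Integrable f (volume.restrict (Set.Icc (0:ℝ) 1)) :=
        (integ _ _).sub (integ _ _)
      have hnn : 0 ≤ᵐ[volume.restrict (Set.Icc (0:ℝ) 1)] f := by
        refine (ae_restrict_iff' measurableSet_Icc).2 (ae_of_all _ fun z hz => ?_)
        have : t 2 * z ≤ t 1 * z := mul_le_mul_of_nonneg_right h21.le hz.1
        have := max_le_max (show (t 1 - t 2) - t 1 * z ≤ (t 1 - t 2) - t 2 * z by linarith)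
          (le_refl (0:ℝ))
        simpa [hf] using this
      rw [integral_pos_iff_support_of_nonneg_ae hnn hfi]
      set δ : ℝ := min ((t 1 - t 2) / t 2) 1 with hδ
      have hδpos : 0 < δ := lt_min (div_pos ha0 ht2) one_pos
      have hsub : Set.Ioo (0:ℝ) δ ⊆ Function.support f := by
        intro z hz
        have hz0 : 0 < z := hz.1
        have hzδ : z < δ := hz.2
        have hz2 : t 2 * z < t 1 - t 2 := by
          have : z < (t 1 - t 2) / t 2 := lt_of_lt_of_le hzδ (min_le_left _ _)
          have h' := (lt_div_iff₀ ht2).mp this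
          nlinarith
        have hlt : max ((t 1 - t 2) - t 1 * z) 0 < (t 1 - t 2) - t 2 * z := by
          apply max_lt _ (by linarith)
          have : t 2 * z < t 1 * z := mul_lt_mul_of_pos_right h21 hz0
          linarith
        have : 0 < f z := by
          simp only [hf]
          rw [max_eq_left (by linarith : (0:ℝ) ≤ (t 1 - t 2) - t 2 * z)]
          linarith
        exact fun h => by rw [h] at this; exact lt_irrefl 0 this
      calc (0:ENNReal) < volume.restrict (Set.Icc (0:ℝ) 1) (Set.Ioo 0 δ) := by
            rw [Measure.restrict_apply measurableSet_Ioo]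
            have hss : Set.Ioo (0:ℝ) δ ⊆ Set.Icc (0:ℝ) 1 := fun x hx =>
              ⟨hx.1.le, hx.2.le.trans (min_le_right _ _)⟩
            rw [Set.inter_eq_left.2 hss, Real.volume_Ioo]
            simpa using hδpos
        _ ≤ volume.restrict (Set.Icc (0:ℝ) 1) (Function.support f) :=
            measure_mono hsub
    have := integral_sub (integ (t 1 - t 2) (t 2)) (integ (t 1 - t 2) (t 1))
    rw [this] at hd
    linarith
  have h2le : ∀ n, t (n + 2) ≤ t (n + 1) := fun n => (ht.anti (n + 1) (by omega)).le
  exact Summable.tsum_lt_tsum_of_nonneg (fun n => Jnonneg _ _) hle hi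
    (Jsummable ht (fun n => (ht.pos (n + 2) (by omega)).le))
end

section
/- For every finite word ω ∈ {0,1}^* and every sequence ε ∈ {0,1}^ℕ, one has M_{ω1̄} ≤ M_{ωε} ≤ M_{ω0̄}, where ωε denotes the concatenation of ω with ε. -/
open MeasureTheory Filter Topology

section Aux

variable {t : ℕ → ℝ}

private lemma luroth_pos' (ht : IsLurothSeq t) {m : ℕ} (hm : 1 ≤ m) : 0 < t m :=
  ht.pos m hm

private lemma luroth_a_nonneg (ht : IsLurothSeq t) (n : ℕ) :
    0 ≤ t (n + 1) - t (n + 2) :=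
  sub_nonneg.2 (ht.anti (n + 1) (by omega)).le

private lemma luroth_summable_a (ht : IsLurothSeq t) :
    Summable (fun n : ℕ => t (n + 1) - t (n + 2)) := by
  apply summable_of_sum_range_le (c := 1) (fun n => luroth_a_nonneg ht n)
  intro N
  have : ∑ i ∈ Finset.range N, (t (i + 1) - t (i + 2)) = t 1 - t (N + 1) := by
    simpa using Finset.sum_range_sub' (fun i => t (i + 1)) N
  rw [this, ht.t_one]
  have := (luroth_pos' ht (show 1 ≤ N + 1 by omega)).le
  linarith

private lemma term_eq_min (ht : IsLurothSeq t) (ε : ℕ → Fin 2) (z : ℝ) (n : ℕ) :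
    (if (t (n + 1) - t (n + 2)) / t (n + 2 - (ε n : ℕ)) < z
      then t (n + 1) - t (n + 2)
      else t (n + 2 - (ε n : ℕ)) * z)
    = min (t (n + 1) - t (n + 2)) (t (n + 2 - (ε n : ℕ)) * z) := by
  have hc : 0 < t (n + 2 - (ε n : ℕ)) :=
    luroth_pos' ht (by have := (ε n).isLt; omega)
  simp only [div_lt_iff₀ hc]
  rcases lt_or_ge (t (n + 1) - t (n + 2)) (z * t (n + 2 - (ε n : ℕ))) with h | h
  · rw [if_pos h, min_eq_left]; rw [mul_comm]; exact h.le
  · rw [if_neg (not_lt.2 h), min_eq_right]; rw [mul_comm] at h; exact h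

private lemma summable_min (ht : IsLurothSeq t) (ε : ℕ → Fin 2) {z : ℝ} (hz : 0 ≤ z) :
    Summable (fun n : ℕ => min (t (n + 1) - t (n + 2)) (t (n + 2 - (ε n : ℕ)) * z)) := by
  apply Summable.of_nonneg_of_le _ (fun n => min_le_left _ _) (luroth_summable_a ht)
  intro n
  exact le_min (luroth_a_nonneg ht n)
    (mul_nonneg (luroth_pos' ht (by have := (ε n).isLt; omega)).le hz)

private lemma F_eq_tsum_min (ht : IsLurothSeq t) (ε : ℕ → Fin 2) (z : ℝ) :
    F t ε z = ∑' n : ℕ, min (t (n + 1) - t (n + 2)) (t (n + 2 - (ε n : ℕ)) * z) :=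
  tsum_congr (term_eq_min ht ε z)

private lemma F_monotoneOn (ht : IsLurothSeq t) (ε : ℕ → Fin 2) :
    MonotoneOn (F t ε) (Set.Icc (0 : ℝ) 1) := by
  intro z₁ hz₁ z₂ hz₂ h12
  rw [F_eq_tsum_min ht, F_eq_tsum_min ht]
  refine Summable.tsum_le_tsum (fun n => ?_) (summable_min ht ε hz₁.1) (summable_min ht ε hz₂.1)
  refine min_le_min le_rfl ?_
  exact mul_le_mul_of_nonneg_left h12 (luroth_pos' ht (by have := (ε n).isLt; omega)).le

private lemma F_mono_eps (ht : IsLurothSeq t) {ε ε' : ℕ → Fin 2}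
    (h : ∀ n, (ε n : ℕ) ≤ (ε' n : ℕ)) {z : ℝ} (hz : z ∈ Set.Icc (0 : ℝ) 1) :
    F t ε z ≤ F t ε' z := by
  rw [F_eq_tsum_min ht, F_eq_tsum_min ht]
  refine Summable.tsum_le_tsum (fun n => ?_) (summable_min ht ε hz.1) (summable_min ht ε' hz.1)
  refine min_le_min le_rfl (mul_le_mul_of_nonneg_right ?_ hz.1)
  have h1 := (ε n).isLt
  have h2 := (ε' n).isLt
  rcases Nat.lt_or_ge (ε n : ℕ) (ε' n : ℕ) with hlt | hge
  · have he : (ε n : ℕ) = 0 ∧ (ε' n : ℕ) = 1 := by omega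
    rw [he.1, he.2]
    exact (ht.anti (n + 1) (by omega)).le
  · have : (ε n : ℕ) = (ε' n : ℕ) := le_antisymm (h n) hge
    rw [this]

private lemma integrableOn_one_sub_F (ht : IsLurothSeq t) (ε : ℕ → Fin 2) :
    MeasureTheory.IntegrableOn (fun z => 1 - F t ε z) (Set.Icc (0 : ℝ) 1) := by
  apply AntitoneOn.integrableOn_isCompact isCompact_Icc
  intro z₁ hz₁ z₂ hz₂ h12
  have := F_monotoneOn ht ε hz₁ hz₂ h12
  simp only
  linarith

private lemma Mavg_mono (ht : IsLurothSeq t) {ε ε' : ℕ → Fin 2}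
    (h : ∀ n, (ε n : ℕ) ≤ (ε' n : ℕ)) :
    Mavg t ε' ≤ Mavg t ε := by
  unfold Mavg
  refine MeasureTheory.setIntegral_mono_on (integrableOn_one_sub_F ht ε')
    (integrableOn_one_sub_F ht ε) measurableSet_Icc (fun z hz => ?_)
  have := F_mono_eps ht h hz
  linarith

end Aux

/-- For every finite word `ω ∈ {0,1}^*` and every `ε ∈ {0,1}^ℕ`,
`M_{ω1̄} ≤ M_{ωε} ≤ M_{ω0̄}`. -/
theorem Mavg_between (t : ℕ → ℝ) (ht : IsLurothSeq t)
    {n : ℕ} (w : Fin n → Fin 2) (ε : ℕ → Fin 2) :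
    Mavg t (cat w fun _ => 1) ≤ Mavg t (cat w ε) ∧
      Mavg t (cat w ε) ≤ Mavg t (cat w fun _ => 0) := by
  constructor
  · refine Mavg_mono ht (fun k => ?_)
    unfold cat
    split
    · exact le_refl _
    · have := (ε (k - n)).isLt; simp; omega
  · refine Mavg_mono ht (fun k => ?_)
    unfold cat
    split
    · exact le_refl _
    · simp
end
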